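/- arXiv:1904.04244 — 2 statements merged into one kernel-verified Lean document; each statement's English description precedes it below -/
import Mathlib

section
/- Let N be a normal subgroup of a group G which is a direct product of isomorphic simple non-abelian groups. Then N is a direct product of minimal normal subgroups of G. -/
set_option maxHeartbeats 1000000

/-! ## Basic framework: classes of finite groups -/

/-- A class of finite groups. -/
def GroupClass : Type 1 := ∀ (G : Type) [Group G] [Finite G], Prop

/-- Containment of classes of groups. -/
def ClassLE (X Y : GroupClass) : Prop := ∀ (G : Type) [Group G] [Finite G], X G → Y G

/-- A formation: a class of groups closed under homomorphic images and
subdirect products (i.e. `G/(M ⊓ N) ∈ X` whenever `G/M, G/N ∈ X`). -/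
structure IsFormation (X : GroupClass) : Prop where
  image : ∀ (G : Type) [Group G] [Finite G] (H : Type) [Group H] [Finite H]
    (f : G →* H), Function.Surjective f → X G → X H
  inter : ∀ (G : Type) [Group G] [Finite G] (M N : Subgroup G)
    (_ : M.Normal) (_ : N.Normal),
    X (G ⧸ M) → X (G ⧸ N) → X (G ⧸ (M ⊓ N))

/-- `X` contains all (finite) nilpotent groups. -/
def ContainsNilpotents (X : GroupClass) : Prop :=
  ∀ (G : Type) [Group G] [Finite G], Group.IsNilpotent G → X G

/-- `X` is closed under subgroups. -/
def Hereditary (X : GroupClass) : Prop :=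
  ∀ (G : Type) [Group G] [Finite G] (H : Subgroup G), X G → X H

/-- `X` is closed under normal subgroups. -/
def NormallyHereditary (X : GroupClass) : Prop :=
  ∀ (G : Type) [Group G] [Finite G] (H : Subgroup G), H.Normal → X G → X H

/-- `X` is saturated: `G/Φ(G) ∈ X` implies `G ∈ X`. -/
def Saturated (X : GroupClass) : Prop :=
  ∀ (G : Type) [Group G] [Finite G], X (G ⧸ frattini G) → X G

/-! ## Joins of normal subgroups -/

theorem normal_iSup_of_normal {G : Type} [Group G] {ι : Sort*} (S : ι → Subgroup G)
    (h : ∀ i, (S i).Normal) : (⨆ i, S i).Normal := by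
  constructor
  intro n hn g
  refine Subgroup.iSup_induction S (C := fun x => g * x * g⁻¹ ∈ ⨆ i, S i) hn ?_ ?_ ?_
  · intro i x hx
    exact Subgroup.mem_iSup_of_mem i ((h i).conj_mem x hx g)
  · simpa using Subgroup.one_mem (⨆ i, S i)
  · intro x y hx hy
    have hm := Subgroup.mul_mem _ hx hy
    have : g * (x * y) * g⁻¹ = (g * x * g⁻¹) * (g * y * g⁻¹) := by group
    rw [this]; exact hm

theorem normal_sInf_of_normal {G : Type} [Group G] (S : Set (Subgroup G))
    (h : ∀ N ∈ S, N.Normal) : (sInf S).Normal := by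
  constructor
  intro n hn g
  rw [Subgroup.mem_sInf] at hn ⊢
  exact fun N hN => (h N hN).conj_mem n (hn N hN) g

/-! ## Radicals and residuals -/

/-- The soluble radical: the join of all soluble normal subgroups. -/
def solubleRadical (G : Type) [Group G] : Subgroup G :=
  ⨆ N : {N : Subgroup G // N.Normal ∧ IsSolvable N}, (N : Subgroup G)

instance solubleRadical_normal (G : Type) [Group G] : (solubleRadical G).Normal :=
  normal_iSup_of_normal _ fun N => N.2.1

/-- `O_p(G)`: the join of all normal `p`-subgroups. -/
def pCore' (p : ℕ) (G : Type) [Group G] : Subgroup G :=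
  ⨆ N : {N : Subgroup G // N.Normal ∧ IsPGroup p N}, (N : Subgroup G)

instance pCore'_normal (p : ℕ) (G : Type) [Group G] : (pCore' p G).Normal :=
  normal_iSup_of_normal _ fun N => N.2.1

/-- The Fitting subgroup: the join of all nilpotent normal subgroups. -/
def fittingSubgroup (G : Type) [Group G] : Subgroup G :=
  ⨆ N : {N : Subgroup G // N.Normal ∧ Group.IsNilpotent N}, (N : Subgroup G)

instance fittingSubgroup_normal (G : Type) [Group G] : (fittingSubgroup G).Normal :=
  normal_iSup_of_normal _ fun N => N.2.1

/-- The class `N_p X = (G : G/O_p(G) ∈ X)`. -/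
def NpMem (p : ℕ) (X : GroupClass) (G : Type) [Group G] [Finite G] : Prop :=
  X (G ⧸ pCore' p G)

def Np (p : ℕ) (X : GroupClass) : GroupClass := fun G g f => @NpMem p X G g f

/-- The `X`-residual `G^X`: the intersection of all normal subgroups with quotient in `X`. -/
def XResidual (X : GroupClass) (G : Type) [Group G] [Finite G] : Subgroup G :=
  sInf {N : Subgroup G | ∃ h : N.Normal, letI := h; X (G ⧸ N)}

instance XResidual_normal (X : GroupClass) (G : Type) [Group G] [Finite G] :
    (XResidual X G).Normal :=
  normal_sInf_of_normal _ fun _ hN => hN.choose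

/-- The class of all (finite) soluble groups. -/
def SolubleClass : GroupClass := fun G g _ => @IsSolvable G g

/-! ## Chief factors -/

/-- `H/K` is a chief factor of `G`: both are normal in `G`, `K < H`, and there is
no normal subgroup of `G` strictly between `K` and `H`. -/
structure IsChiefFactor (G : Type) [Group G] (H K : Subgroup G) : Prop where
  normalH : H.Normal
  normalK : K.Normal
  lt : K < H
  isMax : ∀ L : Subgroup G, L.Normal → K ≤ L → L ≤ H → L = K ∨ L = H

/-- The chief factor `H/K`, realized as the image of `H` in `G/K`. -/
abbrev chiefFactorGroup (G : Type) [Group G] (H K : Subgroup G) [K.Normal] : Type :=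
  ↥(H.map (QuotientGroup.mk' K))

instance chiefFactorGroup_normal (G : Type) [Group G] (H K : Subgroup G)
    [hH : H.Normal] [K.Normal] : (H.map (QuotientGroup.mk' K)).Normal :=
  hH.map _ (QuotientGroup.mk'_surjective K)

/-- The conjugation action of `G` on the chief factor `H/K`. -/
def chiefHom (G : Type) [Group G] (H K : Subgroup G) [H.Normal] [K.Normal] :
    G →* MulAut (chiefFactorGroup G H K) :=
  MulAut.conjNormal.comp (QuotientGroup.mk' K)

/-- The centralizer `C_G(H/K)` of the chief factor `H/K`, i.e. the kernel of the
conjugation action of `G` on `H/K`. -/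
def sectionCentralizer (G : Type) [Group G] (H K : Subgroup G) [H.Normal] [K.Normal] :
    Subgroup G :=
  (chiefHom G H K).ker

instance sectionCentralizer_normal (G : Type) [Group G] (H K : Subgroup G)
    [H.Normal] [K.Normal] : (sectionCentralizer G H K).Normal :=
  MonoidHom.normal_ker _

instance semidirectProduct_finite {N G : Type} [Group N] [Group G] (φ : G →* MulAut N)
    [Finite N] [Finite G] : Finite (N ⋊[φ] G) :=
  Finite.of_injective (fun x => (x.left, x.right)) (by
    rintro ⟨a1, a2⟩ ⟨b1, b2⟩ h
    simp only [Prod.mk.injEq] at h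
    simp [h.1, h.2])

/-- The semidirect product `(H/K) ⋊ (G/C_G(H/K))` with respect to the conjugation action. -/
abbrev chiefSemidirect (G : Type) [Group G] (H K : Subgroup G) [H.Normal] [K.Normal] : Type :=
  (chiefFactorGroup G H K) ⋊[QuotientGroup.kerLift (chiefHom G H K)]
    (G ⧸ sectionCentralizer G H K)

instance chiefSemidirect_group (G : Type) [Group G] (H K : Subgroup G) [H.Normal] [K.Normal] :
    Group (chiefSemidirect G H K) :=
  SemidirectProduct.instGroup

instance chiefSemidirect_finite (G : Type) [Group G] [Finite G] (H K : Subgroup G) [H.Normal]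
    [K.Normal] : Finite (chiefSemidirect G H K) :=
  semidirectProduct_finite _

/-- The chief factor `H/K` is `X`-central in `G`:
`(H/K) ⋊ G/C_G(H/K)` belongs to `X`. -/
def IsCentralIn (X : GroupClass) (G : Type) [Group G] [Finite G] (H K : Subgroup G)
    [H.Normal] [K.Normal] : Prop :=
  X (chiefSemidirect G H K)
/-! ## Sections, simple sections and composition factors -/

/-- The section `H/K` is abelian: all commutators of elements of `H` lie in `K`. -/
def IsAbelianSection (G : Type) [Group G] (H K : Subgroup G) : Prop :=
  ∀ a ∈ H, ∀ b ∈ H, a * b * a⁻¹ * b⁻¹ ∈ K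

/-- The section `H/K` is a `p`-group: every element of `H` has `p`-power order modulo `K`. -/
def IsPSection (p : ℕ) (G : Type) [Group G] (H K : Subgroup G) : Prop :=
  ∀ a ∈ H, ∃ k : ℕ, a ^ (p ^ k) ∈ K

/-- `A/B` is a simple section: `B ⊴ A` and the quotient `A/B` is a simple group
(expressed via the correspondence theorem). -/
structure SimpleSection (G : Type) [Group G] (A B : Subgroup G) : Prop where
  le : B ≤ A
  norm : ∀ a ∈ A, ∀ b ∈ B, a * b * a⁻¹ ∈ B
  ne : ¬ A ≤ B
  minimal : ∀ L : Subgroup G, B ≤ L → L ≤ A →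
    (∀ a ∈ A, ∀ l ∈ L, a * l * a⁻¹ ∈ L) → L = B ∨ L = A

/-- `A` is subnormal in `H` (via a chain of successively normal subgroups). -/
def IsSubnormalIn (G : Type) [Group G] (A H : Subgroup G) : Prop :=
  ∃ (n : ℕ) (c : Fin (n + 1) → Subgroup G), c 0 = A ∧ c (Fin.last n) = H ∧
    ∀ i : Fin n, c i.castSucc ≤ c i.succ ∧
      ∀ g ∈ c i.succ, ∀ a ∈ c i.castSucc, g * a * g⁻¹ ∈ c i.castSucc

/-- `A/B` is a composition factor of the section `H/K`. -/
structure IsCompFactorOf (G : Type) [Group G] (H K A B : Subgroup G) : Prop where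
  hKB : K ≤ B
  hAH : A ≤ H
  subnormal : IsSubnormalIn G A H
  simple : SimpleSection G A B

/-- `x` fixes the section `A/B` (it normalizes both `A` and `B`). -/
def FixesSection {G : Type} [Group G] (x : G) (A B : Subgroup G) : Prop :=
  (∀ c : G, c ∈ A ↔ x * c * x⁻¹ ∈ A) ∧ (∀ c : G, c ∈ B ↔ x * c * x⁻¹ ∈ B)

/-- `x` induces an inner automorphism on the section `A/B`: conjugation by `x`
agrees modulo `B` with conjugation by some element `a ∈ A`. -/
def InducesInnerOn {G : Type} [Group G] (x : G) (A B : Subgroup G) : Prop :=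
  ∃ a ∈ A, ∀ c ∈ A, (x * c * x⁻¹) * (a * c * a⁻¹)⁻¹ ∈ B

/-- `(B.subgroupOf A)` is normal whenever `A` normalizes `B`. -/
theorem sectionNormal {G : Type} [Group G] {A B : Subgroup G}
    (h : ∀ a ∈ A, ∀ b ∈ B, a * b * a⁻¹ ∈ B) : (B.subgroupOf A).Normal := by
  constructor
  intro n hn g
  have := h g g.2 n (by simpa [Subgroup.mem_subgroupOf] using hn)
  simpa [Subgroup.mem_subgroupOf] using this

/-- The statement `A/B ∈ X` for a section `B ⊴ A` of `G`. -/
def XHoldsOfSection (X : GroupClass) {G : Type} [Group G] [Finite G] (A B : Subgroup G)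
    (h : ∀ a ∈ A, ∀ b ∈ B, a * b * a⁻¹ ∈ B) : Prop :=
  letI := sectionNormal h
  X (↥A ⧸ B.subgroupOf A)

/-- The class `E X` of groups all of whose composition factors lie in `X`. -/
def EClassMem (X : GroupClass) (G : Type) [Group G] [Finite G] : Prop :=
  ∀ A B : Subgroup G, IsSubnormalIn G A ⊤ → ∀ h : SimpleSection G A B,
    XHoldsOfSection X A B h.norm

def EClass (X : GroupClass) : GroupClass := fun G g f => @EClassMem X G g f

/-! ## Generalized rank functions -/

/-- `Q` is a direct product of `n` copies of some simple group. -/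
def IsProdOfSimple (Q : Type) [Group Q] (n : ℕ) : Prop :=
  ∃ (S : Type) (hS : Group S), letI := hS; IsSimpleGroup S ∧ Nonempty (Q ≃* (Fin n → S))

/-- The rank of `Q` (the number of simple direct factors of `Q`), via choice. -/
noncomputable def grank (Q : Type) [Group Q] : ℕ :=
  Classical.epsilon (IsProdOfSimple Q)

/-- A generalized rank function: it assigns to each (simple) group a pair of disjoint
sets of natural numbers, and takes the same value on all direct products of copies of
a fixed simple group. -/
structure GenRankFun : Type 1 where
  A : ∀ (S : Type) [Group S], Set ℕ
  B : ∀ (S : Type) [Group S], Set ℕ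
  disj : ∀ (S : Type) [Group S] [Finite S], IsSimpleGroup S → Disjoint (A S) (B S)
  congr : ∀ (S : Type) [Group S] [Finite S], IsSimpleGroup S → ∀ (n : ℕ), 0 < n →
    ∀ (Q : Type) [Group Q] [Finite Q], Nonempty (Q ≃* (Fin n → S)) → A Q = A S ∧ B Q = B S

/-- `R` is a good generalized rank function. -/
def GoodGRF (R : GenRankFun) : Prop :=
  ∀ (S : Type) [Group S] [Finite S], IsSimpleGroup S →
    (∀ a ∈ R.A S, ∀ b : ℕ, 0 < b → b ∣ a → b ∈ R.A S) ∧
    (∀ a ∈ R.B S, ∀ b : ℕ, 0 < b → b ∣ a → b ∈ R.A S ∪ R.B S)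

/-- `R` is a very good generalized rank function. -/
def VeryGoodGRF (R : GenRankFun) : Prop :=
  ∀ (S : Type) [Group S] [Finite S], IsSimpleGroup S →
    (∀ a ∈ R.A S, ∀ b : ℕ, 0 < b → b ≤ a → b ∈ R.A S) ∧
    (∀ a ∈ R.B S, ∀ b : ℕ, 0 < b → b ≤ a → b ∈ R.B S)

/-- The generalized rank of the chief factor `H/K` of `G` lies in `R(H/K)`:
`gr(H/K, G) ∈ R(H/K)`. -/
def GRSat (R : GenRankFun) (G : Type) [Group G] (H K : Subgroup G) [K.Normal] : Prop :=
  grank (chiefFactorGroup G H K) ∈ R.A (chiefFactorGroup G H K) ∨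
  (grank (chiefFactorGroup G H K) ∈ R.B (chiefFactorGroup G H K) ∧
    ∀ (x : G) (A B : Subgroup G), IsCompFactorOf G H K A B → FixesSection x A B →
      InducesInnerOn x A B)

/-! ## The class `X(R)` -/

/-- Membership in the class `X(R)`: every `X`-eccentric chief factor `H/K` of `G`
satisfies `H/K ∉ X` and `gr(H/K, G) ∈ R(H/K)`. -/
def ClassRMem (X : GroupClass) (R : GenRankFun) (G : Type) [Group G] [Finite G] : Prop :=
  ∀ H K : Subgroup G, ∀ h : IsChiefFactor G H K,
    letI := h.normalH; letI := h.normalK;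
    ¬ IsCentralIn X G H K →
      (¬ X (chiefFactorGroup G H K) ∧ GRSat R G H K)

def ClassR (X : GroupClass) (R : GenRankFun) : GroupClass :=
  fun G g f => @ClassRMem X R G g f

/-! ## Quasi-`X`-groups -/

/-- `G` is a quasi-`X`-group: every element of `G` induces an inner automorphism on
every `X`-eccentric chief factor of `G`. -/
def QuasiMem (X : GroupClass) (G : Type) [Group G] [Finite G] : Prop :=
  ∀ H K : Subgroup G, ∀ h : IsChiefFactor G H K,
    letI := h.normalH; letI := h.normalK;
    ¬ IsCentralIn X G H K → ∀ x : G, InducesInnerOn x H K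

def QuasiClass (X : GroupClass) : GroupClass := fun G g f => @QuasiMem X G g f

/-! ## Hypercenter and the intersection of maximal `X`-subgroups -/

/-- The `X`-hypercenter of `G`: the largest normal subgroup of `G` all chief factors
of `G` below which are `X`-central. -/
def XHypercenter (X : GroupClass) (G : Type) [Group G] [Finite G] : Subgroup G :=
  ⨆ Z : {Z : Subgroup G // Z.Normal ∧ ∀ H K : Subgroup G, ∀ h : IsChiefFactor G H K,
      H ≤ Z → letI := h.normalH; letI := h.normalK; IsCentralIn X G H K},
    (Z : Subgroup G)

instance XHypercenter_normal (X : GroupClass) (G : Type) [Group G] [Finite G] :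
    (XHypercenter X G).Normal :=
  normal_iSup_of_normal _ fun Z => Z.2.1

/-- `U` is an `X`-maximal subgroup of `G`. -/
def IsXMaximal (X : GroupClass) (G : Type) [Group G] [Finite G] (U : Subgroup G) : Prop :=
  X U ∧ ∀ V : Subgroup G, U ≤ V → X V → U = V

/-- `Int_X(G)`: the intersection of all `X`-maximal subgroups of `G`. -/
def XInt (X : GroupClass) (G : Type) [Group G] [Finite G] : Subgroup G :=
  sInf {U : Subgroup G | IsXMaximal X G U}

/-! ## Minimal normal subgroups and the socle -/

def IsMinimalNormal (G : Type) [Group G] (N : Subgroup G) : Prop :=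
  N.Normal ∧ N ≠ ⊥ ∧ ∀ L : Subgroup G, L.Normal → L ≤ N → L = ⊥ ∨ L = N

/-- The socle of `G`: the join of all minimal normal subgroups. -/
def socle (G : Type) [Group G] : Subgroup G :=
  ⨆ N : {N : Subgroup G // IsMinimalNormal G N}, (N : Subgroup G)

instance socle_normal (G : Type) [Group G] : (socle G).Normal :=
  normal_iSup_of_normal _ fun N => N.2.1

/-! ## Internal direct products -/

/-- `N` is the internal direct product of the family `S` of subgroups of `G`. -/
structure InternalDirectProduct (G : Type) [Group G] (N : Subgroup G) {ι : Type}
    (S : ι → Subgroup G) : Prop where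
  le : ∀ i, S i ≤ N
  sup : (⨆ i, S i) = N
  comm : ∀ i j, i ≠ j → ∀ x ∈ S i, ∀ y ∈ S j, x * y = y * x
  indep : ∀ i, Disjoint (S i) (⨆ j ∈ ({i}ᶜ : Set ι), S j)

/-- The section `Rtop/Z` is the internal direct product of the sections `W i / Z`. -/
structure SectionDirectProduct (G : Type) [Group G] (Rtop Z : Subgroup G) {ι : Type}
    (W : ι → Subgroup G) : Prop where
  le_bot : ∀ i, Z ≤ W i
  le_top : ∀ i, W i ≤ Rtop
  sup : Z ⊔ (⨆ i, W i) = Rtop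
  comm : ∀ i j, i ≠ j → ∀ x ∈ W i, ∀ y ∈ W j, x * y * x⁻¹ * y⁻¹ ∈ Z
  indep : ∀ i, W i ⊓ (Z ⊔ ⨆ j ∈ ({i}ᶜ : Set ι), W j) ≤ Z

/-- A (possibly trivial) semisimple group: the internal direct product of a family of
simple non-abelian (normal) subgroups. -/
def IsSemisimpleGroup (Q : Type) [Group Q] : Prop :=
  ∃ (ι : Type) (S : ι → Subgroup Q), InternalDirectProduct Q ⊤ S ∧
    ∀ i, IsSimpleGroup (S i) ∧ ¬ (∀ x y : (S i), x * y = y * x)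
/-! ## Composition and local definitions of formations -/

/-- `f` is a composition definition of `X`:
`X = (G : G/G_S ∈ f 0 and G/C_G(H/K) ∈ f p for every abelian p-chief factor H/K)`. -/
def DefinedByCompDef (f : ℕ → GroupClass) (X : GroupClass) : Prop :=
  ∀ (G : Type) [Group G] [Finite G],
    X G ↔ (f 0 (G ⧸ solubleRadical G) ∧
      ∀ (p : ℕ), p.Prime → ∀ H K : Subgroup G, ∀ h : IsChiefFactor G H K,
        letI := h.normalH; letI := h.normalK;
        IsAbelianSection G H K → IsPSection p G H K →
          f p (G ⧸ sectionCentralizer G H K))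

/-- `f` is the canonical composition definition of `X`:
a composition definition with `f 0 = X` and `f p = N_p (f p) ⊆ X` for all primes. -/
structure IsCanonicalCompDef (f : ℕ → GroupClass) (X : GroupClass) : Prop where
  defines : DefinedByCompDef f X
  zero : f 0 = X
  np : ∀ p : ℕ, p.Prime → Np p (f p) = f p
  le : ∀ p : ℕ, p.Prime → ClassLE (f p) X

/-- `X` is a composition (Baer-local) formation. -/
def IsCompFormation (X : GroupClass) : Prop :=
  IsFormation X ∧ ∃ f : ℕ → GroupClass, DefinedByCompDef f X

/-- `f` is a local definition of `X`:
`X = (G : G/C_G(H/K) ∈ f p for every chief factor H/K of G and every p ∣ |H/K|)`. -/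
def DefinedByLocalDef (f : ℕ → GroupClass) (X : GroupClass) : Prop :=
  ∀ (G : Type) [Group G] [Finite G],
    X G ↔ ∀ H K : Subgroup G, ∀ h : IsChiefFactor G H K, ∀ p : ℕ, p.Prime →
      letI := h.normalH; letI := h.normalK;
      p ∣ Nat.card (chiefFactorGroup G H K) →
        f p (G ⧸ sectionCentralizer G H K)

/-- `f` is the canonical local definition of `X`. -/
structure IsCanonicalLocalDef (f : ℕ → GroupClass) (X : GroupClass) : Prop where
  defines : DefinedByLocalDef f X
  np : ∀ p : ℕ, p.Prime → Np p (f p) = f p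
  le : ∀ p : ℕ, p.Prime → ClassLE (f p) X

/-- `X` is solubly saturated: `G/Φ(G_S) ∈ X` implies `G ∈ X`, where `G_S` is the
soluble radical of `G`.  (The Frattini subgroup of the soluble radical, viewed as a
subgroup of `G`, is normal in `G`; its normality is taken as a hypothesis.) -/
def SolublySaturated (X : GroupClass) : Prop :=
  ∀ (G : Type) [Group G] [Finite G] (N : Subgroup G) (hN : N.Normal),
    N = (frattini (solubleRadical G)).map (solubleRadical G).subtype →
    (letI := hN; X (G ⧸ N)) → X G

/-- `Xl` is the greatest saturated subformation of `X`. -/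
def IsGreatestSaturatedSubformation (X Xl : GroupClass) : Prop :=
  (IsFormation Xl ∧ Saturated Xl ∧ (∃ (G : Type) (g : Group G) (f : Finite G), Xl G)
    ∧ ClassLE Xl X) ∧
  ∀ Y : GroupClass, IsFormation Y → Saturated Y →
    (∃ (G : Type) (g : Group G) (f : Finite G), Y G) → ClassLE Y X → ClassLE Y Xl

/-! ## Outer automorphism groups and wreath products -/

instance mulAut_finite (S : Type) [Group S] [Finite S] : Finite (MulAut S) :=
  Finite.of_injective (fun e => (e : S → S)) (by
    intro a b h
    ext x
    exact congrFun h x)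

instance conj_range_normal (S : Type) [Group S] : (MulAut.conj (G := S)).range.Normal := by
  constructor
  rintro x ⟨g, rfl⟩ φ
  refine ⟨φ g, ?_⟩
  ext s
  show φ g * s * (φ g)⁻¹ = φ (g * φ⁻¹ s * g⁻¹)
  rw [map_mul, map_mul, map_inv]
  simp

/-- The outer automorphism group `Out S = Aut S / Inn S`. -/
abbrev OutGroup (S : Type) [Group S] : Type :=
  MulAut S ⧸ (MulAut.conj (G := S)).range

/-- The permutation action of `Perm (Fin n)` on `Fin n → H`. -/
def permMulAut (H : Type) [Group H] (n : ℕ) : Equiv.Perm (Fin n) →* MulAut (Fin n → H) where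
  toFun σ :=
    { toFun := fun f => f ∘ σ.symm
      invFun := fun f => f ∘ σ
      left_inv := fun f => by funext i; simp
      right_inv := fun f => by funext i; simp
      map_mul' := fun f g => rfl }
  map_one' := by
    apply MulEquiv.ext; intro f; rfl
  map_mul' := by
    intro σ τ
    apply MulEquiv.ext; intro f
    funext i
    rfl

/-- The natural wreath product `H ≀ S_n`. -/
abbrev WreathSym (H : Type) [Group H] (n : ℕ) : Type :=
  (Fin n → H) ⋊[permMulAut H n] Equiv.Perm (Fin n)

/-! ## Hypercenter (nilpotent case) -/

/-- The hypercenter `Z_∞(G)`: the join of the upper central series. -/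
def hypercenter (G : Type) [Group G] : Subgroup G :=
  ⨆ n : ℕ, upperCentralSeries G n

instance hypercenter_normal (G : Type) [Group G] : (hypercenter G).Normal :=
  normal_iSup_of_normal _ fun n => (inferInstance : (Subgroup.upperCentralSeries G n).Normal)

/-- The class of finite nilpotent groups. -/
def NilpotentClass : GroupClass := fun G g _ => @Group.IsNilpotent G g


/-! ## Further constructions -/

/-- `Z(G, R, X, n)`: the greatest normal subgroup of `G` such that every
`G`-composition factor `H/K` below it which is `X`-eccentric in `G` satisfies
`H/K ∉ X`, `r(H/K, G) > n` and `gr(H/K, G) ∈ R(H/K)`. -/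
def ZRFn (X : GroupClass) (R : GenRankFun) (n : ℕ) (G : Type) [Group G] [Finite G] :
    Subgroup G :=
  ⨆ Z : {Z : Subgroup G // Z.Normal ∧ ∀ H K : Subgroup G, ∀ h : IsChiefFactor G H K,
      H ≤ Z → letI := h.normalH; letI := h.normalK;
      ¬ IsCentralIn X G H K →
        (¬ X (chiefFactorGroup G H K) ∧ n < grank (chiefFactorGroup G H K) ∧
          GRSat R G H K)},
    (Z : Subgroup G)

instance ZRFn_normal (X : GroupClass) (R : GenRankFun) (n : ℕ) (G : Type) [Group G]
    [Finite G] : (ZRFn X R n G).Normal :=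
  normal_iSup_of_normal _ fun Z => Z.2.1

/-- The `X`-radical of `G`: the join of all normal `X`-subgroups. -/
def XRadical (X : GroupClass) (G : Type) [Group G] [Finite G] : Subgroup G :=
  ⨆ N : {N : Subgroup G // N.Normal ∧ X N}, (N : Subgroup G)

/-- The symmetric group `S_{n+1}` has a simple section not belonging to `X`. -/
def HasBadSection (X : GroupClass) (n : ℕ) : Prop :=
  ∃ A B : Subgroup (Equiv.Perm (Fin (n + 1))), ∃ h : SimpleSection _ A B,
    ¬ XHoldsOfSection X A B h.norm

/-- The center of a subgroup `D`, viewed as a subgroup of the ambient group. -/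
def centerSubgroup {G : Type} [Group G] (D : Subgroup G) : Subgroup G :=
  (Subgroup.center D).map D.subtype

/-- `G` is `c`-supersoluble: every chief factor of `G` is a simple group. -/
def CSupersolubleMem (G : Type) [Group G] [Finite G] : Prop :=
  ∀ H K : Subgroup G, IsChiefFactor G H K → SimpleSection G H K

def CSupersoluble : GroupClass := fun G g f => @CSupersolubleMem G g f

/-- The class `A(m)` of abelian groups of exponent dividing `m`. -/
def AbelianExpClass (m : ℕ) : GroupClass := fun G _g _f =>
  (∀ a b : G, a * b = b * a) ∧ ∀ x : G, x ^ m = 1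

/-- `G` is supersoluble: it has a normal series with cyclic factors. -/
def SupersolubleMem (G : Type) [Group G] [Finite G] : Prop :=
  ∃ (n : ℕ) (c : Fin (n + 1) → Subgroup G), c 0 = ⊥ ∧ c (Fin.last n) = ⊤ ∧
    ∀ i : Fin n, c i.castSucc ≤ c i.succ ∧ (c i.castSucc).Normal ∧
      ∃ x ∈ c i.succ, ∀ y ∈ c i.succ, ∃ k : ℤ, y * (x ^ k)⁻¹ ∈ c i.castSucc

def Supersoluble : GroupClass := fun G g f => @SupersolubleMem G g f

/-- `G` is quasinilpotent: for every chief factor `H/K` of `G` which is not central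
(i.e. `H/K ≰ Z(G/K)`), every element of `G` induces an inner automorphism on it. -/
def QuasinilpotentMem (G : Type) [Group G] [Finite G] : Prop :=
  ∀ H K : Subgroup G, IsChiefFactor G H K →
    ¬ (∀ h ∈ H, ∀ g : G, g * h * g⁻¹ * h⁻¹ ∈ K) →
    ∀ x : G, InducesInnerOn x H K

/-- Membership in the class `X_{ca}`: abelian chief factors are `X`-central,
non-abelian chief factors are simple. -/
def CaMem (X : GroupClass) (G : Type) [Group G] [Finite G] : Prop :=
  ∀ H K : Subgroup G, ∀ h : IsChiefFactor G H K,
    letI := h.normalH; letI := h.normalK;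
    (IsAbelianSection G H K → IsCentralIn X G H K) ∧
    (¬ IsAbelianSection G H K → SimpleSection G H K)

/-- `H` is `s`-critical for `X`: `H ∉ X` but all proper subgroups of `H` are in `X`. -/
def SCritical (X : GroupClass) (H : Type) [Group H] [Finite H] : Prop :=
  ¬ X H ∧ ∀ U : Subgroup H, U ≠ ⊤ → X U

/-- `F̃(G)`, defined by `F̃(G)/Φ(G) = Soc(G/Φ(G))`. -/
def ftilde (G : Type) [Group G] : Subgroup G :=
  (socle (G ⧸ frattini G)).comap (QuotientGroup.mk' (frattini G))

/-- The simple group `S` belongs to the class `H` of Theorem 3: every `X`-central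
chief factor (of any group) which is a direct product of copies of `S` is `Xl`-central. -/
def HClassMem (X Xl : GroupClass) (S : Type) [Group S] : Prop :=
  IsSimpleGroup S ∧
  ∀ (G : Type) [Group G] [Finite G] (H K : Subgroup G) (h : IsChiefFactor G H K) (n : ℕ),
    0 < n →
    (letI := h.normalH; letI := h.normalK;
      Nonempty (chiefFactorGroup G H K ≃* (Fin n → S)) →
      IsCentralIn X G H K → IsCentralIn Xl G H K)
namespace IDPaux

variable {G : Type} [Group G]

/-- Conjugate of a subgroup. -/
def cjj (g : G) (H : Subgroup G) : Subgroup G := H.map ((MulAut.conj g).toMonoidHom)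

theorem mem_cjj {g x : G} {H : Subgroup G} : x ∈ cjj g H ↔ g⁻¹ * x * g ∈ H := by
  constructor
  · rintro ⟨y, hy, rfl⟩
    simpa [MulAut.conj_apply, mul_assoc] using hy
  · intro h
    exact ⟨g⁻¹ * x * g, h, by simp [MulAut.conj_apply, mul_assoc]⟩

theorem cjj_cjj (g h : G) (H : Subgroup G) : cjj g (cjj h H) = cjj (g * h) H := by
  ext x
  simp only [mem_cjj, mul_inv_rev, mul_assoc]

theorem cjj_one (H : Subgroup G) : cjj (1 : G) H = H := by
  ext x; simp [mem_cjj]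

theorem cjj_le (g : G) {H K : Subgroup G} (h : H ≤ K) : cjj g H ≤ cjj g K :=
  Subgroup.map_mono h

theorem cjj_eq_bot {g : G} {H : Subgroup G} (h : cjj g H = ⊥) : H = ⊥ := by
  rw [Subgroup.eq_bot_iff_forall]
  intro x hx
  have : g * x * g⁻¹ ∈ cjj g H := mem_cjj.mpr (by simpa [mul_assoc] using hx)
  rw [h, Subgroup.mem_bot] at this
  have := congrArg (fun y => g⁻¹ * y * g) this
  simpa [mul_assoc] using this

theorem cjj_of_normal {H : Subgroup G} (h : H.Normal) (g : G) : cjj g H = H := by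
  ext x
  rw [mem_cjj]
  constructor
  · intro hx
    have := h.conj_mem _ hx g
    simpa [mul_assoc] using this
  · intro hx
    have := h.conj_mem _ hx g⁻¹
    simpa [mul_assoc] using this

/-- A nontrivial subgroup of a simple subgroup normalized by it is everything. -/
theorem simple_absorb {A L : Subgroup G} (hs : IsSimpleGroup A) (hL : L ≤ A)
    (hn : ∀ a ∈ A, ∀ b ∈ L, a * b * a⁻¹ ∈ L) : L = ⊥ ∨ L = A := by
  letI := sectionNormal hn
  rcases hs.eq_bot_or_eq_top_of_normal (L.subgroupOf A) this with hbot | htop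
  · left
    rw [Subgroup.eq_bot_iff_forall]
    intro x hx
    have : (⟨x, hL hx⟩ : A) ∈ L.subgroupOf A := Subgroup.mem_subgroupOf.mpr hx
    rw [hbot, Subgroup.mem_bot] at this
    exact congrArg Subtype.val this
  · right
    refine le_antisymm hL fun x hx => ?_
    have : (⟨x, hx⟩ : A) ∈ L.subgroupOf A := by rw [htop]; trivial
    exact Subgroup.mem_subgroupOf.mp this

/-- A nonabelian simple subgroup has trivial center. -/
theorem center_triv {A : Subgroup G} (hs : IsSimpleGroup A)
    (hnab : ¬ ∀ x y : A, x * y = y * x) {z : G} (hz : z ∈ A)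
    (hc : ∀ y ∈ A, z * y = y * z) : z = 1 := by
  rcases hs.eq_bot_or_eq_top_of_normal (Subgroup.center A) (by
      constructor
      intro n hn g
      rw [Subgroup.mem_center_iff] at hn ⊢
      intro y
      have h1 := hn (g⁻¹ * y * g)
      calc y * (g * n * g⁻¹) = g * ((g⁻¹ * y * g) * n) * g⁻¹ := by group
        _ = g * (n * (g⁻¹ * y * g)) * g⁻¹ := by rw [h1]
        _ = g * n * g⁻¹ * y := by group)
    with hbot | htop
  · have : (⟨z, hz⟩ : A) ∈ Subgroup.center A := by
      rw [Subgroup.mem_center_iff]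
      intro g
      exact Subtype.ext ((hc g g.2).symm)
    rw [hbot, Subgroup.mem_bot] at this
    exact congrArg Subtype.val this
  · exfalso
    apply hnab
    intro x y
    have : y ∈ Subgroup.center A := by rw [htop]; trivial
    exact (Subgroup.mem_center_iff.mp this x)

end IDPaux

/-- Lemma 4: a normal subgroup which is the internal direct product
of isomorphic simple non-abelian subgroups is the internal direct product of minimal
normal subgroups of `G`. -/
theorem internalDirectProduct_minimalNormal
    (G : Type) [Group G] [Finite G] (N : Subgroup G) (hN : N.Normal)
    (ι : Type) (S : ι → Subgroup G)
    (hprod : InternalDirectProduct G N S)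
    (hsimple : ∀ i, IsSimpleGroup (S i))
    (hnonab : ∀ i, ¬ (∀ x y : (S i), x * y = y * x))
    (hiso : ∀ i j, Nonempty ((S i) ≃* (S j))) :
    ∃ (κ : Type) (T : κ → Subgroup G), (∀ k, IsMinimalNormal G (T k)) ∧
      InternalDirectProduct G N T := by
  classical
  obtain ⟨hle, hsup, hcomm, hindep⟩ := hprod
  -- each factor is nontrivial
  have hSne : ∀ i, S i ≠ ⊥ := by
    intro i h
    haveI : Nontrivial (S i) := (hsimple i).toNontrivial
    obtain ⟨x, hx⟩ := exists_ne (1 : S i)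
    apply hx
    have h1 : (x : G) ∈ (⊥ : Subgroup G) := by rw [← h]; exact x.2
    exact Subtype.ext (Subgroup.mem_bot.mp h1)
  -- ι is finite
  haveI : Finite (Subgroup G) :=
    Finite.of_injective (fun H : Subgroup G => (H : Set G)) SetLike.coe_injective
  have hSinj : Function.Injective S := by
    intro i j hij
    by_contra hne
    have h1 : S i ≤ ⨆ j ∈ ({i}ᶜ : Set ι), S j := by
      rw [hij]
      exact le_iSup₂ (f := fun (j : ι) (_ : j ∈ ({i}ᶜ : Set ι)) => S j) j
        (Set.mem_compl_singleton_iff.mpr (Ne.symm hne))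
    exact hSne i (le_bot_iff.mp ((hindep i) le_rfl h1))
  haveI : Finite ι := Finite.of_injective S hSinj
  cases nonempty_fintype ι
  -- biSup = subtype iSup
  have hAsub : ∀ c : Set ι, (⨆ i ∈ c, S i) = ⨆ i : c, S (i : ι) :=
    fun c => (iSup_subtype'' c S).symm
  -- N normalizes each factor
  have hnormN : ∀ n ∈ N, ∀ i, ∀ a ∈ S i, n * a * n⁻¹ ∈ S i := by
    intro n hn
    rw [← hsup] at hn
    refine Subgroup.iSup_induction S
      (C := fun n => ∀ i, ∀ a ∈ S i, n * a * n⁻¹ ∈ S i) hn ?_ ?_ ?_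
    · intro j x hx i a ha
      by_cases h : j = i
      · subst h
        exact Subgroup.mul_mem _ (Subgroup.mul_mem _ hx ha) (Subgroup.inv_mem _ hx)
      · have hxa := hcomm j i h x hx a ha
        have : x * a * x⁻¹ = a := by rw [hxa, mul_assoc, mul_inv_cancel, mul_one]
        rwa [this]
    · intro i a ha; simpa using ha
    · intro x y hx hy i a ha
      have h1 := hx i _ (hy i a ha)
      have : x * y * a * (x * y)⁻¹ = x * (y * a * y⁻¹) * x⁻¹ := by group
      rwa [this]
  -- elements of a factor commute with the sup of the others
  have hcommRest : ∀ (c : Set ι) (i : ι), i ∉ c → ∀ a ∈ S i,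
      ∀ w ∈ ⨆ j ∈ c, S j, a * w = w * a := by
    intro c i hi a ha w hw
    rw [hAsub] at hw
    refine Subgroup.iSup_induction (fun j : c => S (j : ι))
      (C := fun w => a * w = w * a) hw ?_ (by simp) ?_
    · rintro ⟨j, hj⟩ x hx
      exact hcomm i j (fun h => hi (h ▸ hj)) a ha x hx
    · intro x y hx hy
      rw [← mul_assoc, hx, mul_assoc, hy, ← mul_assoc]
  -- the big product homomorphism
  have hcomm' : Pairwise fun i j : ι => ∀ x y : G, x ∈ S i → y ∈ S j → Commute x y :=
    fun {i j} h x y hx hy => hcomm i j h x hx y hy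
  have hind : iSupIndep S := fun i =>
    (hindep i).mono_right
      (iSup₂_le fun j hj =>
        le_iSup₂ (f := fun (j : ι) (_ : j ∈ ({i}ᶜ : Set ι)) => S j) j hj)
  set φ := Subgroup.noncommPiCoprod hcomm' with hφ
  have hφinj : Function.Injective φ :=
    Subgroup.injective_noncommPiCoprod_of_iSupIndep hind
  have hφ_single : ∀ (i : ι) (y : S i), φ (Pi.mulSingle i y) = y :=
    fun i y => Subgroup.noncommPiCoprod_mulSingle i y
  have hmem_of : ∀ (c : Set ι) (f : ∀ i, S i), (∀ i, i ∉ c → f i = 1) →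
      φ f ∈ ⨆ i ∈ c, S i := by
    intro c f hf
    rw [hφ, Subgroup.noncommPiCoprod_apply]
    apply Subgroup.noncommProd_mem
    intro i _
    by_cases h : i ∈ c
    · exact le_iSup₂ (f := fun (j : ι) (_ : j ∈ c) => S j) i h (f i).2
    · rw [hf i h, OneMemClass.coe_one]
      exact Subgroup.one_mem _
  have hmem_to : ∀ (c : Set ι) (x : G), x ∈ (⨆ i ∈ c, S i) →
      ∃ f : ∀ i, S i, (∀ i, i ∉ c → f i = 1) ∧ φ f = x := by
    intro c x hx
    rw [hAsub] at hx
    refine Subgroup.iSup_induction (fun i : c => S (i : ι))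
      (C := fun x => ∃ f : ∀ i, S i, (∀ i, i ∉ c → f i = 1) ∧ φ f = x) hx ?_ ?_ ?_
    · rintro ⟨i, hi⟩ x hx
      exact ⟨Pi.mulSingle i ⟨x, hx⟩,
        fun j hj => Pi.mulSingle_eq_of_ne (fun h => by subst h; exact hj hi) _,
        hφ_single i ⟨x, hx⟩⟩
    · exact ⟨1, fun _ _ => rfl, map_one φ⟩
    · rintro x y ⟨f, hf, rfl⟩ ⟨f', hf', rfl⟩
      exact ⟨f * f', fun i hi => by rw [Pi.mul_apply, hf i hi, hf' i hi, one_mul],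
        map_mul φ f f'⟩
  -- complementary sups intersect trivially
  have hdisj : ∀ (c : Set ι) (x : G), x ∈ (⨆ i ∈ c, S i) → x ∈ (⨆ i ∈ cᶜ, S i) → x = 1 := by
    intro c x h1 h2
    obtain ⟨f, hf, rfl⟩ := hmem_to c x h1
    obtain ⟨f', hf', hfx⟩ := hmem_to cᶜ _ h2
    have hff : f' = f := hφinj hfx
    have hf1 : f = 1 := by
      funext i
      by_cases h : i ∈ c
      · rw [← hff]; exact hf' i (by simpa using h)
      · exact hf i h
    rw [hf1, map_one]
  -- centre of N is trivial
  have hcent : ∀ x ∈ N, (∀ y ∈ N, x * y = y * x) → x = 1 := by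
    intro x hx hxc
    have hxu : x ∈ ⨆ i ∈ (Set.univ : Set ι), S i := by
      have hle' : N ≤ ⨆ i ∈ (Set.univ : Set ι), S i := by
        rw [← hsup]
        exact iSup_le fun i =>
          le_iSup₂ (f := fun (j : ι) (_ : j ∈ (Set.univ : Set ι)) => S j) i trivial
      exact hle' hx
    obtain ⟨f, -, rfl⟩ := hmem_to Set.univ x hxu
    suffices h : ∀ i, f i = 1 by rw [funext h]; exact map_one φ
    intro i
    have hdecomp : f = Pi.mulSingle i (f i) * Function.update f i 1 := by
      funext j
      by_cases h : j = i
      · subst h; simp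
      · simp [h, Pi.mulSingle_eq_of_ne h]
    set w := φ (Function.update f i 1) with hwdef
    have hw : w ∈ ⨆ j ∈ ({i}ᶜ : Set ι), S j := by
      apply hmem_of
      intro j hj
      have : j = i := by simpa using hj
      subst this
      exact Function.update_self j 1 f
    have hφf : φ f = (f i : G) * w := by
      conv_lhs => rw [hdecomp]
      rw [map_mul, hφ_single]
    have hfi_comm : ∀ a ∈ S i, (f i : G) * a = a * (f i : G) := by
      intro a ha
      have c1 : Commute a w :=
        hcommRest ({i}ᶜ : Set ι) i (by simp) a ha w hw
      have c2 : Commute (φ f) a := hxc a (hle i ha)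
      have c3 : Commute ((f i : G)) a := by
        have h1 : (f i : G) = φ f * w⁻¹ := by
          rw [hφf, mul_assoc, mul_inv_cancel, mul_one]
        rw [h1]
        exact c2.mul_left c1.symm.inv_left
      exact c3
    have : (f i : G) = 1 :=
      IDPaux.center_triv (hsimple i) (hnonab i) (f i).2 hfi_comm
    exact Subtype.ext (by simpa using this)
  -- factor absorption
  have habsorb : ∀ L : Subgroup G, (∀ n ∈ N, ∀ b ∈ L, n * b * n⁻¹ ∈ L) →
      ∀ i, L ⊓ S i = ⊥ ∨ S i ≤ L := by
    intro L hLn i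
    have hnorm : ∀ a ∈ S i, ∀ b ∈ L ⊓ S i, a * b * a⁻¹ ∈ L ⊓ S i := by
      intro a ha b hb
      rw [Subgroup.mem_inf] at hb ⊢
      exact ⟨hLn a (hle i ha) b hb.1,
        Subgroup.mul_mem _ (Subgroup.mul_mem _ ha hb.2) (Subgroup.inv_mem _ ha)⟩
    rcases IDPaux.simple_absorb (hsimple i) inf_le_right hnorm with h | h
    · exact Or.inl h
    · exact Or.inr (le_trans (le_of_eq h.symm) inf_le_left)
  -- key dichotomy
  have hkey : ∀ L : Subgroup G, L ≤ N → (∀ n ∈ N, ∀ b ∈ L, n * b * n⁻¹ ∈ L) →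
      L = ⊥ ∨ ∃ i, S i ≤ L := by
    intro L hLN hLn
    by_cases h : ∃ i, S i ≤ L
    · exact Or.inr h
    · left
      push_neg at h
      have hinf : ∀ i, L ⊓ S i = ⊥ := fun i => (habsorb L hLn i).resolve_right (h i)
      have hLc : ∀ x ∈ L, ∀ i, ∀ y ∈ S i, x * y = y * x := by
        intro x hx i y hy
        have hmem : x * y * x⁻¹ * y⁻¹ ∈ L ⊓ S i := by
          rw [Subgroup.mem_inf]
          constructor
          · have h1 : y * x⁻¹ * y⁻¹ ∈ L := hLn y (hle i hy) x⁻¹ (Subgroup.inv_mem _ hx)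
            have : x * y * x⁻¹ * y⁻¹ = x * (y * x⁻¹ * y⁻¹) := by group
            rw [this]
            exact Subgroup.mul_mem _ hx h1
          · exact Subgroup.mul_mem _ (hnormN x (hLN hx) i y hy) (Subgroup.inv_mem _ hy)
        rw [hinf i, Subgroup.mem_bot] at hmem
        calc x * y = (x * y * x⁻¹ * y⁻¹) * (y * x) := by group
          _ = 1 * (y * x) := by rw [hmem]
          _ = y * x := one_mul _
      have hLN' : ∀ x ∈ L, ∀ y ∈ N, x * y = y * x := by
        intro x hx y hy
        rw [← hsup] at hy
        refine Subgroup.iSup_induction S (C := fun y => x * y = y * x) hy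
          (fun i y hy => hLc x hx i y hy) (by simp) ?_
        intro a b ha hb
        rw [← mul_assoc, ha, mul_assoc, hb, ← mul_assoc]
      exact (Subgroup.eq_bot_iff_forall L).mpr fun x hx => hcent x (hLN hx) (hLN' x hx)
  -- conjugates of factors are normalized by N
  have hcjnorm : ∀ (g : G) (i : ι), ∀ n ∈ N, ∀ b ∈ IDPaux.cjj g (S i),
      n * b * n⁻¹ ∈ IDPaux.cjj g (S i) := by
    intro g i n hn b hb
    rw [IDPaux.mem_cjj] at hb ⊢
    have h1 : g⁻¹ * (n * b * n⁻¹) * g =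
        (g⁻¹ * n * g) * (g⁻¹ * b * g) * (g⁻¹ * n * g)⁻¹ := by group
    rw [h1]
    have hn' : g⁻¹ * n * g ∈ N := by
      have := hN.conj_mem n hn g⁻¹
      simpa [mul_assoc] using this
    exact hnormN _ hn' i _ hb
  -- conjugates of factors are factors
  have hcjS : ∀ (g : G) (i : ι), ∃ j, IDPaux.cjj g (S i) = S j := by
    intro g i
    have hK_le : IDPaux.cjj g (S i) ≤ N :=
      (IDPaux.cjj_le g (hle i)).trans (le_of_eq (IDPaux.cjj_of_normal hN g))
    rcases hkey (IDPaux.cjj g (S i)) hK_le (hcjnorm g i) with hbot | ⟨j, hj⟩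
    · exact absurd (IDPaux.cjj_eq_bot hbot) (hSne i)
    · have hpull : IDPaux.cjj g⁻¹ (S j) ≤ S i := by
        have := IDPaux.cjj_le g⁻¹ hj
        rwa [IDPaux.cjj_cjj, inv_mul_cancel, IDPaux.cjj_one] at this
      rcases IDPaux.simple_absorb (hsimple i) hpull
          (fun a ha b hb => hcjnorm g⁻¹ j a (hle i ha) b hb) with h0 | h0
      · exact absurd (IDPaux.cjj_eq_bot h0) (hSne j)
      · refine ⟨j, ?_⟩
        rw [← h0, IDPaux.cjj_cjj, mul_inv_cancel, IDPaux.cjj_one]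
  -- the orbit setoid
  letI st : Setoid ι :=
    ⟨fun i j => ∃ g : G, IDPaux.cjj g (S i) = S j,
     ⟨fun i => ⟨1, IDPaux.cjj_one _⟩,
      fun {i j} ⟨g, hg⟩ => ⟨g⁻¹, by rw [← hg, IDPaux.cjj_cjj, inv_mul_cancel, IDPaux.cjj_one]⟩,
      fun {i j k} ⟨g, hg⟩ ⟨g', hg'⟩ => ⟨g' * g, by rw [← IDPaux.cjj_cjj, hg, hg']⟩⟩⟩
  set T : Quotient st → Subgroup G :=
    fun k => ⨆ i ∈ {i : ι | Quotient.mk st i = k}, S i with hT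
  have hTle : ∀ k, T k ≤ N := fun k => iSup₂_le fun i _ => hle i
  have hSleT : ∀ i, S i ≤ T (Quotient.mk st i) := fun i =>
    le_iSup₂ (f := fun (j : ι) (_ : j ∈ {j : ι | Quotient.mk st j = Quotient.mk st i}) => S j)
      i rfl
  have hTcompl : ∀ k, (⨆ k' ∈ ({k}ᶜ : Set (Quotient st)), T k') ≤
      ⨆ i ∈ {i : ι | Quotient.mk st i = k}ᶜ, S i := by
    intro k
    refine iSup₂_le fun k' hk' => iSup₂_le fun i hi =>
      le_iSup₂ (f := fun (j : ι) (_ : j ∈ ({j : ι | Quotient.mk st j = k}ᶜ : Set ι)) => S j)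
        i ?_
    intro hmem
    exact (Set.mem_compl_singleton_iff.mp hk') (by rw [← hi, hmem])
  have hTdisjc : ∀ k, ∀ x ∈ T k, x ∈ (⨆ i ∈ {i : ι | Quotient.mk st i = k}ᶜ, S i) → x = 1 :=
    fun k x hx hy => hdisj _ x hx hy
  have hTdisj : ∀ k, Disjoint (T k) (⨆ k' ∈ ({k}ᶜ : Set (Quotient st)), T k') := by
    intro k
    refine Disjoint.mono_right (hTcompl k) ?_
    rw [Subgroup.disjoint_def]
    exact fun {x} hx hy => hTdisjc k x hx hy
  -- commutation across different orbits
  have hcommT : ∀ (i : ι) (x : G), x ∈ S i → ∀ k, Quotient.mk st i ≠ k →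
      ∀ y ∈ T k, x * y = y * x := by
    intro i x hx k hik y hy
    refine hcommRest {j : ι | Quotient.mk st j = k} i hik x hx y hy
  refine ⟨Quotient st, T, fun k => ⟨?_, ?_, ?_⟩, ?_, ?_, ?_, ?_⟩
  · -- T k is normal
    constructor
    intro n hn g
    have hn' : n ∈ ⨆ i : {i : ι | Quotient.mk st i = k}, S (i : ι) := by
      rw [← hAsub]; exact hn
    refine Subgroup.iSup_induction (fun i : {i : ι | Quotient.mk st i = k} => S (i : ι))
      (C := fun n => g * n * g⁻¹ ∈ T k) hn' ?_ (by simpa using Subgroup.one_mem (T k)) ?_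
    · rintro ⟨i, hi⟩ x hx
      obtain ⟨j, hj⟩ := hcjS g i
      have hmem : g * x * g⁻¹ ∈ S j := by
        rw [← hj, IDPaux.mem_cjj]
        have : g⁻¹ * (g * x * g⁻¹) * g = x := by group
        rwa [this]
      have hjk : Quotient.mk st j = k := by
        rw [← hi]
        exact (Quotient.sound (⟨g, hj⟩ : st.r i j)).symm
      exact hjk ▸ hSleT j <| hmem
    · intro x y hx hy
      have : g * (x * y) * g⁻¹ = (g * x * g⁻¹) * (g * y * g⁻¹) := by group
      rw [this]
      exact Subgroup.mul_mem _ hx hy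
  · -- T k ≠ ⊥
    obtain ⟨i, rfl⟩ := Quotient.exists_rep k
    intro h
    exact hSne i (le_bot_iff.mp (h ▸ hSleT i))
  · -- minimality
    intro L hLnorm hLT
    rcases hkey L (hLT.trans (hTle k)) (fun n _ b hb => hLnorm.conj_mem b hb n)
      with hbot | ⟨i, hSiL⟩
    · exact Or.inl hbot
    · right
      have hik : Quotient.mk st i = k := by
        by_contra hne
        have h1 : S i ≤ ⨆ j ∈ {j : ι | Quotient.mk st j = k}ᶜ, S j :=
          le_iSup₂ (f := fun (j : ι) (_ : j ∈ ({j : ι | Quotient.mk st j = k}ᶜ : Set ι)) => S j)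
            i hne
        have h2 : S i ≤ T k := hSiL.trans hLT
        exact hSne i ((Subgroup.eq_bot_iff_forall _).mpr
          fun x hx => hTdisjc k x (h2 hx) (h1 hx))
      have hTkL : T k ≤ L := by
        refine iSup₂_le fun j hj => ?_
        have hrij : st.r i j := Quotient.exact (hik.trans (Set.mem_setOf_eq ▸ hj).symm)
        obtain ⟨g, hg⟩ := hrij
        rw [← hg]
        exact (IDPaux.cjj_le g hSiL).trans (le_of_eq (IDPaux.cjj_of_normal hLnorm g))
      exact le_antisymm hLT hTkL
  · exact hTle
  · -- sup
    refine le_antisymm (iSup_le fun k => hTle k) ?_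
    rw [← hsup]
    exact iSup_le fun i => (hSleT i).trans (le_iSup T (Quotient.mk st i))
  · -- comm
    intro k l hkl x hx y hy
    have hx' : x ∈ ⨆ i : {i : ι | Quotient.mk st i = k}, S (i : ι) := by
      rw [← hAsub]; exact hx
    refine Subgroup.iSup_induction (fun i : {i : ι | Quotient.mk st i = k} => S (i : ι))
      (C := fun x => x * y = y * x) hx' ?_ (by simp) ?_
    · rintro ⟨i, hi⟩ x hx
      exact hcommT i x hx l (hi ▸ hkl) y hy
    · intro a b ha hb
      rw [mul_assoc, hb, ← mul_assoc, ha, mul_assoc]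
  · exact hTdisj
end

section
/- Let F be a normally hereditary saturated formation containing all nilpotent groups, and let R be the generalized rank function with R(S) = (∅, {1}) for every simple group S. Then F(R) = F*, the class of quasi-F-groups. -/
set_option maxHeartbeats 1000000

/-! ## Auxiliary lemmas for Statement 19 -/

section Aux19

open QuotientGroup

theorem aux_normby_iSup {Γ : Type} [Group Γ] {N : Subgroup Γ} {ι : Sort*} (S : ι → Subgroup Γ)
    (h : ∀ i, ∀ g ∈ N, ∀ t ∈ S i, g * t * g⁻¹ ∈ S i) :
    ∀ g ∈ N, ∀ t ∈ (⨆ i, S i), g * t * g⁻¹ ∈ (⨆ i, S i) := by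
  intro g hg t ht
  refine Subgroup.iSup_induction S (C := fun x => g * x * g⁻¹ ∈ ⨆ i, S i) ht ?_ ?_ ?_
  · intro i x hx
    exact Subgroup.mem_iSup_of_mem i (h i g hg x hx)
  · simpa using Subgroup.one_mem (⨆ i, S i)
  · intro x y hx hy
    have hm := Subgroup.mul_mem _ hx hy
    have he : g * (x * y) * g⁻¹ = (g * x * g⁻¹) * (g * y * g⁻¹) := by group
    rw [he]; exact hm

theorem aux_normby_sSup {Γ : Type} [Group Γ] {N : Subgroup Γ} (s : Set (Subgroup Γ))
    (h : ∀ U ∈ s, ∀ g ∈ N, ∀ t ∈ U, g * t * g⁻¹ ∈ U) :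
    ∀ g ∈ N, ∀ t ∈ sSup s, g * t * g⁻¹ ∈ sSup s := by
  rw [sSup_eq_iSup']
  exact aux_normby_iSup (N := N) _ (fun U => h U.1 U.2)

theorem aux_mem_sup {Γ : Type} [Group Γ] {A B : Subgroup Γ}
    (hB : ∀ b ∈ B, ∀ a ∈ A, b * a * b⁻¹ ∈ A) :
    ∀ x ∈ A ⊔ B, ∃ a ∈ A, ∃ b ∈ B, x = a * b := by
  intro x hx
  let P : Subgroup Γ :=
    { carrier := {x | ∃ a ∈ A, ∃ b ∈ B, x = a * b}
      one_mem' := ⟨1, A.one_mem, 1, B.one_mem, by group⟩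
      mul_mem' := by
        rintro x y ⟨a1, ha1, b1, hb1, rfl⟩ ⟨a2, ha2, b2, hb2, rfl⟩
        exact ⟨a1 * (b1 * a2 * b1⁻¹), A.mul_mem ha1 (hB b1 hb1 a2 ha2), b1 * b2,
          B.mul_mem hb1 hb2, by group⟩
      inv_mem' := by
        rintro x ⟨a, ha, b, hb, rfl⟩
        refine ⟨b⁻¹ * a⁻¹ * b, ?_, b⁻¹, B.inv_mem hb, by group⟩
        have := hB b⁻¹ (B.inv_mem hb) a⁻¹ (A.inv_mem ha)
        simpa using this }
  have hA : A ≤ P := fun a ha => ⟨a, ha, 1, B.one_mem, by group⟩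
  have hBP : B ≤ P := fun b hb => ⟨1, A.one_mem, b, hb, by group⟩
  exact sup_le hA hBP hx

theorem aux_commute_of_inf_eq_bot {Γ : Type} [Group Γ] {A B : Subgroup Γ} (h : A ⊓ B = ⊥)
    (hAB : ∀ b ∈ B, ∀ a ∈ A, b * a * b⁻¹ ∈ A) (hBA : ∀ a ∈ A, ∀ b ∈ B, a * b * a⁻¹ ∈ B) :
    ∀ x ∈ A, ∀ y ∈ B, x * y = y * x := by
  intro x hx y hy
  have h1 : x * y * x⁻¹ * y⁻¹ ∈ A := by
    have h2 := hAB y hy x⁻¹ (A.inv_mem hx)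
    have he : x * y * x⁻¹ * y⁻¹ = x * (y * x⁻¹ * y⁻¹) := by group
    rw [he]; exact A.mul_mem hx h2
  have h2 : x * y * x⁻¹ * y⁻¹ ∈ B := by
    have h3 := hBA x hx y hy
    exact B.mul_mem h3 (B.inv_mem hy)
  have h3 : x * y * x⁻¹ * y⁻¹ ∈ A ⊓ B := Subgroup.mem_inf.mpr ⟨h1, h2⟩
  rw [h] at h3
  have h4 : x * y * x⁻¹ * y⁻¹ = 1 := Subgroup.mem_bot.mp h3
  calc x * y = (x * y * x⁻¹ * y⁻¹) * (y * x) := by group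
  _ = y * x := by rw [h4, one_mul]

theorem aux_card_lt {Γ : Type} [Group Γ] [Finite Γ] {U V : Subgroup Γ} (h : U < V) :
    Nat.card U < Nat.card V := by
  have hss : (U : Set Γ) ⊂ (V : Set Γ) := SetLike.coe_ssubset_coe.mpr h
  have := Set.ncard_lt_ncard hss (Set.toFinite _)
  rwa [← Nat.card_coe_set_eq, ← Nat.card_coe_set_eq] at this

theorem aux_comap_map_mk' {G : Type} [Group G] (K L : Subgroup G) [K.Normal] (h : K ≤ L) :
    (L.map (QuotientGroup.mk' K)).comap (QuotientGroup.mk' K) = L := by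
  rw [Subgroup.comap_map_eq, QuotientGroup.ker_mk', sup_of_le_left h]

theorem aux_map_eq_inj {G : Type} [Group G] (K L L' : Subgroup G) [K.Normal]
    (hL : K ≤ L) (hL' : K ≤ L')
    (h : L.map (QuotientGroup.mk' K) = L'.map (QuotientGroup.mk' K)) : L = L' := by
  rw [← aux_comap_map_mk' K L hL, ← aux_comap_map_mk' K L' hL', h]

theorem aux_map_mk'_self {G : Type} [Group G] (K : Subgroup G) [K.Normal] :
    K.map (QuotientGroup.mk' K) = ⊥ := by
  rw [eq_bot_iff]
  rintro x ⟨k, hk, rfl⟩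
  simpa [Subgroup.mem_bot] using (QuotientGroup.eq_one_iff k).mpr hk

theorem aux_chief_ne_bot {G : Type} [Group G] {H K : Subgroup G} [K.Normal] (h : K < H) :
    H.map (QuotientGroup.mk' K) ≠ ⊥ := by
  intro heq
  have hle : H ≤ K := by
    intro x hx
    have hm : QuotientGroup.mk' K x ∈ (⊥ : Subgroup (G ⧸ K)) :=
      heq ▸ Subgroup.mem_map_of_mem _ hx
    simpa [Subgroup.mem_bot, QuotientGroup.eq_one_iff] using hm
  exact h.not_ge hle

theorem aux_chief_min {G : Type} [Group G] {H K : Subgroup G} [hKn : K.Normal]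
    (hc : IsChiefFactor G H K) :
    ∀ L : Subgroup (G ⧸ K), L.Normal → L ≤ H.map (QuotientGroup.mk' K) →
      L = ⊥ ∨ L = H.map (QuotientGroup.mk' K) := by
  intro L hLn hLle
  set V := L.comap (QuotientGroup.mk' K) with hV
  have hVn : V.Normal := hLn.comap _
  have hKV : K ≤ V := by
    intro k hk
    have : QuotientGroup.mk' K k = 1 := (QuotientGroup.eq_one_iff k).mpr hk
    simp only [hV, Subgroup.mem_comap, this]
    exact L.one_mem
  have hVH : V ≤ H := by
    intro x hx
    have hx' : QuotientGroup.mk' K x ∈ H.map (QuotientGroup.mk' K) := hLle hx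
    obtain ⟨h, hh, hhx⟩ := hx'
    obtain ⟨z, hz, hzx⟩ := (QuotientGroup.mk'_eq_mk' K).mp hhx
    rw [← hzx]
    exact H.mul_mem hh (hc.lt.le hz)
  have hmapV : V.map (QuotientGroup.mk' K) = L :=
    Subgroup.map_comap_eq_self_of_surjective (QuotientGroup.mk'_surjective K) L
  rcases hc.isMax V hVn hKV hVH with h | h
  · left; rw [← hmapV, h]; exact aux_map_mk'_self K
  · right; rw [← hmapV, h]

theorem aux_subgroupOf_normal_of_image {G : Type} [Group G] {H K L : Subgroup G} [K.Normal]
    (hLH : L.map (QuotientGroup.mk' K) ≤ H.map (QuotientGroup.mk' K))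
    (hnorm : ∀ g ∈ H, ∀ l ∈ L, g * l * g⁻¹ ∈ L) :
    ((L.map (QuotientGroup.mk' K)).subgroupOf (H.map (QuotientGroup.mk' K))).Normal := by
  constructor
  intro w hw u
  rw [Subgroup.mem_subgroupOf] at hw ⊢
  obtain ⟨l, hl, hlw⟩ := hw
  obtain ⟨g, hg, hgu⟩ := u.2
  have he : ((u * w * u⁻¹ : ↥(H.map (QuotientGroup.mk' K))) : G ⧸ K)
      = QuotientGroup.mk' K (g * l * g⁻¹) := by
    push_cast
    rw [← hlw, ← hgu]
    simp [map_mul]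
  rw [he]
  exact Subgroup.mem_map_of_mem _ (hnorm g hg l hl)

theorem aux_simple_of_mulEquiv {A B : Type} [Group A] [Group B] (e : A ≃* B)
    (h : IsSimpleGroup A) : IsSimpleGroup B := by
  haveI : Nontrivial A := h.toNontrivial
  haveI : Nontrivial B := e.symm.toEquiv.nontrivial
  constructor
  intro W hW
  have hc : (W.comap e.toMonoidHom).Normal := hW.comap _
  have hmc : (W.comap e.toMonoidHom).map e.toMonoidHom = W :=
    Subgroup.map_comap_eq_self_of_surjective e.surjective W
  rcases h.eq_bot_or_eq_top_of_normal _ hc with h' | h'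
  · left; rw [← hmc, h', Subgroup.map_bot]
  · right; rw [← hmc, h']
    rw [← MonoidHom.range_eq_map]
    exact MonoidHom.range_eq_top.mpr e.surjective

theorem aux_prod_rank_one {Q : Type} [Group Q] (hQ : IsSimpleGroup Q) {m : ℕ}
    (h : IsProdOfSimple Q m) : m = 1 := by
  match m, h with
  | 0, h =>
    exfalso
    obtain ⟨S, hS, hsimple, ⟨e⟩⟩ := h
    letI := hS
    haveI : Nontrivial Q := hQ.toNontrivial
    haveI : IsEmpty (Fin 0) := Fin.isEmpty'
    haveI : Unique (Fin 0 → S) := Pi.uniqueOfIsEmpty _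
    obtain ⟨x, y, hxy⟩ := exists_pair_ne Q
    exact hxy (e.injective (Subsingleton.elim _ _))
  | 1, h => rfl
  | (m + 2), h =>
    exfalso
    obtain ⟨S, hS, hsimple, ⟨e⟩⟩ := h
    letI := hS
    haveI : Nontrivial Q := hQ.toNontrivial
    haveI : Nontrivial S := hsimple.toNontrivial
    obtain ⟨t, ht⟩ := exists_ne (1 : S)
    have h01 : (0 : Fin (m + 2)) ≠ (1 : Fin (m + 2)) := by
      intro h; exact absurd (Fin.val_eq_of_eq h) (by simp)
    let W : Subgroup (Fin (m + 2) → S) := (Pi.evalMonoidHom (fun _ : Fin (m + 2) => S) 0).ker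
    let U : Subgroup Q := W.comap e.toMonoidHom
    have hUn : U.Normal := (MonoidHom.normal_ker _).comap _
    rcases hQ.eq_bot_or_eq_top_of_normal U hUn with h' | h'
    · let a : Fin (m + 2) → S := Pi.mulSingle (1 : Fin (m + 2)) t
      have haW : a ∈ W := by
        show a 0 = 1
        exact Pi.mulSingle_eq_of_ne h01 t
      have haU : e.symm a ∈ U := by
        rw [Subgroup.mem_comap]
        show e (e.symm a) ∈ W
        rw [e.apply_symm_apply]
        exact haW
      rw [h'] at haU
      have h1 : e.symm a = 1 := Subgroup.mem_bot.mp haU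
      have ha1 : a = 1 := by
        have h2 := congrArg e h1
        rwa [e.apply_symm_apply, map_one] at h2
      apply ht
      have h3 := congrFun ha1 1
      simpa [a] using h3
    · let b : Fin (m + 2) → S := fun _ => t
      have hbU : e.symm b ∈ U := by rw [h']; trivial
      rw [Subgroup.mem_comap] at hbU
      have hbW : b ∈ W := by
        have h4 : e (e.symm b) ∈ W := hbU
        rwa [e.apply_symm_apply] at h4
      exact ht hbW

theorem aux_grank_simple {Q : Type} [Group Q] (hQ : IsSimpleGroup Q) : grank Q = 1 := by
  have hw : IsProdOfSimple Q 1 :=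
    ⟨Q, ‹Group Q›, hQ, ⟨(MulEquiv.piUnique (fun _ : Fin 1 => Q)).symm⟩⟩
  have := Classical.epsilon_spec (p := IsProdOfSimple Q) ⟨1, hw⟩
  exact aux_prod_rank_one hQ this

/-- The big structure theorem: a minimal normal subgroup of a finite group is a direct
product of pairwise isomorphic simple groups. -/
theorem aux_min_normal_decomp {Γ : Type} [Group Γ] [Finite Γ]
    (N : Subgroup Γ) (hNn : N.Normal) (hbot : N ≠ ⊥)
    (hmin : ∀ L : Subgroup Γ, L.Normal → L ≤ N → L = ⊥ ∨ L = N) :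
    ∃ (n : ℕ) (S : Type) (_ : Group S) (_ : Finite S),
      0 < n ∧ IsSimpleGroup S ∧ Nonempty (↥N ≃* (Fin n → S)) := by
  classical
  set 𝒮 : Set (Subgroup Γ) := {U | U ≤ N ∧ U ≠ ⊥ ∧ ∀ g ∈ N, ∀ t ∈ U, g * t * g⁻¹ ∈ U}
    with h𝒮
  have hN𝒮 : N ∈ 𝒮 :=
    ⟨le_rfl, hbot, fun g hg t ht => N.mul_mem (N.mul_mem hg ht) (N.inv_mem hg)⟩
  obtain ⟨T, hT𝒮, hTmin⟩ : ∃ T ∈ 𝒮, ∀ U ∈ 𝒮, Nat.card T ≤ Nat.card U := by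
    obtain ⟨T, hT, hk⟩ := Nat.sInf_mem
      (s := (fun U : Subgroup Γ => Nat.card ↥U) '' 𝒮) ⟨_, ⟨N, hN𝒮, rfl⟩⟩
    exact ⟨T, hT, fun U hU => le_of_eq_of_le hk (Nat.sInf_le ⟨U, hU, rfl⟩)⟩
  set cg : Γ → (Γ ≃* Γ) := fun g => MulAut.conj g with hcg
  set Tc : Γ → Subgroup Γ := fun g => T.map (cg g : Γ →* Γ) with hTc
  have happ : ∀ (g t : Γ), (cg g : Γ →* Γ) t = g * t * g⁻¹ := fun _ _ => rfl
  have memTc : ∀ g x, x ∈ Tc g ↔ g⁻¹ * x * g ∈ T := by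
    intro g x
    constructor
    · rintro ⟨t, ht, rfl⟩
      rw [happ]
      have he : g⁻¹ * (g * t * g⁻¹) * g = t := by group
      rw [he]; exact ht
    · intro h
      refine ⟨g⁻¹ * x * g, h, ?_⟩
      rw [happ]; group
  have hTc𝒮 : ∀ g, Tc g ∈ 𝒮 := by
    intro g
    refine ⟨?_, ?_, ?_⟩
    · intro x hx
      rw [memTc] at hx
      have h1 : g * (g⁻¹ * x * g) * g⁻¹ ∈ N := hNn.conj_mem _ (hT𝒮.1 hx) g
      have he : g * (g⁻¹ * x * g) * g⁻¹ = x := by group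
      rwa [he] at h1
    · intro hb
      apply hT𝒮.2.1
      rw [eq_bot_iff]
      intro t ht
      have h1 : g * t * g⁻¹ ∈ Tc g := by
        rw [memTc]
        have he : g⁻¹ * (g * t * g⁻¹) * g = t := by group
        rw [he]; exact ht
      rw [hb] at h1
      have := Subgroup.mem_bot.mp h1
      have ht1 : t = 1 := by
        have := congrArg (fun z => g⁻¹ * z * g) this
        simpa [mul_assoc] using this
      simp [ht1]
    · intro a ha t ht
      rw [memTc] at ht ⊢
      have haN : g⁻¹ * a * g ∈ N := by
        have h1 : g⁻¹ * a * (g⁻¹)⁻¹ ∈ N := hNn.conj_mem _ ha g⁻¹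
        simpa using h1
      have h2 := hT𝒮.2.2 _ haN _ ht
      have he : g⁻¹ * a * g * (g⁻¹ * t * g) * (g⁻¹ * a * g)⁻¹ = g⁻¹ * (a * t * a⁻¹) * g := by
        group
      rwa [he] at h2
  have cardTc : ∀ g, Nat.card (Tc g) = Nat.card T :=
    fun g => (Nat.card_congr ((cg g).subgroupMap T).toEquiv).symm
  have hTcmin : ∀ (g : Γ) (U : Subgroup Γ), U ≤ Tc g → U ≠ ⊥ →
      (∀ a ∈ N, ∀ t ∈ U, a * t * a⁻¹ ∈ U) → U = Tc g := by
    intro g U hle hne hnb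
    exact Subgroup.eq_of_le_of_card_ge hle
      (by rw [cardTc]; exact hTmin U ⟨hle.trans (hTc𝒮 g).1, hne, hnb⟩)
  have hTc1 : Tc 1 = T := by
    ext x; rw [memTc]; simp
  have hJoin : (⨆ g : Γ, Tc g) = N := by
    have hn : (⨆ g : Γ, Tc g).Normal := by
      constructor
      intro t ht g
      refine Subgroup.iSup_induction Tc (C := fun x => g * x * g⁻¹ ∈ ⨆ g', Tc g') ht ?_ ?_ ?_
      · intro h x hx
        refine Subgroup.mem_iSup_of_mem (g * h) ?_
        rw [memTc] at hx ⊢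
        have he : (g * h)⁻¹ * (g * x * g⁻¹) * (g * h) = h⁻¹ * x * h := by group
        rw [he]; exact hx
      · simpa using Subgroup.one_mem _
      · intro x y hx hy
        have hm := Subgroup.mul_mem _ hx hy
        have he : g * (x * y) * g⁻¹ = (g * x * g⁻¹) * (g * y * g⁻¹) := by group
        rw [he]; exact hm
    rcases hmin _ hn (iSup_le fun g => (hTc𝒮 g).1) with h | h
    · exfalso
      have h1 : Tc 1 = ⊥ := le_bot_iff.mp (h ▸ le_iSup Tc 1)
      exact hT𝒮.2.1 (hTc1 ▸ h1)
    · exact h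
  -- greedy choice of an independent family of conjugates with maximal join
  set A : Set ℕ := {k | ∃ F : Finset (Subgroup Γ),
      (∀ U ∈ F, ∃ g : Γ, U = Tc g) ∧
      (∀ U ∈ F, U ⊓ sSup ((F.erase U : Finset (Subgroup Γ)) : Set (Subgroup Γ)) = ⊥) ∧
      Nat.card ↥(sSup ((F : Finset (Subgroup Γ)) : Set (Subgroup Γ))) = k} with hAdef
  have hA0 : Nat.card ↥(sSup ((∅ : Finset (Subgroup Γ)) : Set (Subgroup Γ))) ∈ A :=
    ⟨∅, by simp, by simp, rfl⟩
  have hAbdd : BddAbove A := by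
    refine ⟨Nat.card Γ, ?_⟩
    rintro k ⟨F, -, -, rfl⟩
    exact Subgroup.card_le_card_group _
  obtain ⟨F, hF𝒞, hFind, hFcard⟩ := Nat.sSup_mem ⟨_, hA0⟩ hAbdd
  set D := sSup ((F : Finset (Subgroup Γ)) : Set (Subgroup Γ)) with hD
  have hF𝒞' : ∀ U ∈ F, ∃ g : Γ, U = Tc g := hF𝒞
  have hDle : ∀ U ∈ F, U ≤ D := fun U hU => le_sSup (by exact_mod_cast hU)
  have hmemN : ∀ U ∈ F, U ≤ N := by
    intro U hU
    obtain ⟨g, rfl⟩ := hF𝒞' U hU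
    exact (hTc𝒮 g).1
  have hmemnb : ∀ U ∈ F, ∀ g ∈ N, ∀ t ∈ U, g * t * g⁻¹ ∈ U := by
    intro U hU
    obtain ⟨g, rfl⟩ := hF𝒞' U hU
    exact (hTc𝒮 g).2.2
  have hDN : D ≤ N := sSup_le (fun U hU => hmemN U (by exact_mod_cast hU))
  have hDnb : ∀ g ∈ N, ∀ t ∈ D, g * t * g⁻¹ ∈ D :=
    aux_normby_sSup _ (fun U hU => hmemnb U (by exact_mod_cast hU))
  have hDN' : D = N := by
    by_contra hne
    have hTg : ∃ g, ¬ Tc g ≤ D := by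
      by_contra hall
      push_neg at hall
      exact hne (le_antisymm hDN (hJoin ▸ iSup_le hall))
    obtain ⟨g, hg⟩ := hTg
    have hTgD : Tc g ⊓ D = ⊥ := by
      rcases eq_or_ne (Tc g ⊓ D) ⊥ with h | h
      · exact h
      · exfalso
        apply hg
        have heq := hTcmin g (Tc g ⊓ D) inf_le_left h (fun a ha t ht => by
          obtain ⟨ht1, ht2⟩ := Subgroup.mem_inf.mp ht
          exact Subgroup.mem_inf.mpr ⟨(hTc𝒮 g).2.2 a ha t ht1, hDnb a ha t ht2⟩)
        rw [← heq]
        exact inf_le_right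
    have hgF : Tc g ∉ F := fun h => hg (hDle _ h)
    set F' := insert (Tc g) F with hF'
    have hF'𝒞 : ∀ U ∈ F', ∃ g' : Γ, U = Tc g' := by
      intro U hU
      rcases Finset.mem_insert.mp hU with h | h
      · exact ⟨g, h⟩
      · exact hF𝒞' U h
    have hF'ind : ∀ U ∈ F',
        U ⊓ sSup ((F'.erase U : Finset (Subgroup Γ)) : Set (Subgroup Γ)) = ⊥ := by
      intro U hU
      rcases Finset.mem_insert.mp hU with rfl | hUF
      · rw [Finset.erase_insert hgF]
        exact hTgD
      · have hUne : Tc g ≠ U := fun h => hgF (h ▸ hUF)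
        rw [Finset.erase_insert_of_ne hUne, Finset.coe_insert, sSup_insert]
        rw [eq_bot_iff]
        intro x hx
        obtain ⟨hxU, hxsup⟩ := Subgroup.mem_inf.mp hx
        set E := sSup ((F.erase U : Finset (Subgroup Γ)) : Set (Subgroup Γ)) with hE
        have hED : E ≤ D := sSup_le (fun V hV =>
          hDle V (Finset.mem_of_mem_erase (by exact_mod_cast hV)))
        have hEN : E ≤ N := hED.trans hDN
        obtain ⟨t, htT, d, hdE, rfl⟩ := aux_mem_sup (A := Tc g) (B := E)
          (fun b hb a ha => (hTc𝒮 g).2.2 b (hEN hb) a ha) x hxsup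
        have htD : t ∈ D := by
          have he : t = (t * d) * d⁻¹ := by group
          rw [he]
          exact D.mul_mem (hDle U hUF hxU) (D.inv_mem (hED hdE))
        have ht1 : t = 1 := by
          have hm : t ∈ Tc g ⊓ D := Subgroup.mem_inf.mpr ⟨htT, htD⟩
          rw [hTgD] at hm
          exact Subgroup.mem_bot.mp hm
        rw [ht1, one_mul] at hxU ⊢
        have hm : d ∈ U ⊓ sSup ((F.erase U : Finset (Subgroup Γ)) : Set (Subgroup Γ)) :=
          Subgroup.mem_inf.mpr ⟨hxU, hdE⟩
        rw [hFind U hUF] at hm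
        exact hm
    have hmem' : Nat.card ↥(sSup ((F' : Finset (Subgroup Γ)) : Set (Subgroup Γ))) ∈ A :=
      ⟨F', hF'𝒞, hF'ind, rfl⟩
    have hlt : Nat.card ↥D < Nat.card ↥(sSup ((F' : Finset (Subgroup Γ)) : Set (Subgroup Γ))) := by
      apply aux_card_lt
      rw [hF', Finset.coe_insert, sSup_insert]
      exact lt_of_le_of_ne le_sup_right (fun h => hg (h ▸ le_sup_left))
    have hle' := le_csSup hAbdd hmem'
    omega
  have hFne : F.Nonempty := by
    rcases Finset.eq_empty_or_nonempty F with rfl | h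
    · exfalso
      apply hbot
      rw [← hDN', hD]
      simp
    · exact h
  -- decomposition of N as internal product of members of F
  have hsup_erase : ∀ U ∈ F,
      U ⊔ sSup ((F.erase U : Finset (Subgroup Γ)) : Set (Subgroup Γ)) = N := by
    intro U hU
    have h1 : insert U (F.erase U) = F := Finset.insert_erase hU
    rw [← hDN', hD]
    conv_rhs => rw [← h1]
    rw [Finset.coe_insert, sSup_insert]
  have hcentral : ∀ U ∈ F, ∀ d ∈ sSup ((F.erase U : Finset (Subgroup Γ)) : Set (Subgroup Γ)),
      ∀ x ∈ U, d * x = x * d := by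
    intro U hU
    have h1 : sSup ((F.erase U : Finset (Subgroup Γ)) : Set (Subgroup Γ)) ≤
        Subgroup.centralizer (U : Set Γ) := by
      apply sSup_le
      intro V hV
      have hV' : V ∈ F.erase U := by exact_mod_cast hV
      have hVF : V ∈ F := Finset.mem_of_mem_erase hV'
      have hVU : V ≠ U := Finset.ne_of_mem_erase hV'
      have hinf : V ⊓ U = ⊥ := by
        rw [eq_bot_iff, ← hFind U hU]
        exact le_inf inf_le_right (inf_le_left.trans (le_sSup (by exact_mod_cast hV')))
      intro v hv
      rw [Subgroup.mem_centralizer_iff]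
      intro u hu
      exact (aux_commute_of_inf_eq_bot hinf
        (fun b hb a ha => hmemnb V hVF b (hmemN U hU hb) a ha)
        (fun a ha b hb => hmemnb U hU a (hmemN V hVF ha) b hb) v hv u hu).symm
    intro d hd x hx
    exact (Subgroup.mem_centralizer_iff.mp (h1 hd) x hx).symm
  -- simplicity of the members of F
  have hsimp : ∀ U ∈ F, IsSimpleGroup ↥U := by
    intro U hU
    obtain ⟨g, hgU⟩ := hF𝒞' U hU
    haveI : Nontrivial ↥U := (Subgroup.nontrivial_iff_ne_bot U).mpr
      (by rw [hgU]; exact (hTc𝒮 g).2.1)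
    constructor
    intro W hW
    set W' := W.map U.subtype with hW'def
    have hW'U : W' ≤ U := Subgroup.map_subtype_le W
    have hW'conj : ∀ u ∈ U, ∀ w ∈ W', u * w * u⁻¹ ∈ W' := by
      intro u hu w hw
      obtain ⟨w0, hw0, rfl⟩ := hw
      have hm := hW.conj_mem w0 hw0 ⟨u, hu⟩
      refine ⟨_, hm, ?_⟩
      simp
    have hW'nb : ∀ a ∈ N, ∀ w ∈ W', a * w * a⁻¹ ∈ W' := by
      intro a ha w hw
      have haUD : a ∈ U ⊔ sSup ((F.erase U : Finset (Subgroup Γ)) : Set (Subgroup Γ)) := by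
        rw [hsup_erase U hU]; exact ha
      obtain ⟨u, hu, d, hd, rfl⟩ := aux_mem_sup
        (B := sSup ((F.erase U : Finset (Subgroup Γ)) : Set (Subgroup Γ)))
        (fun b hb x hx => by
          rw [hcentral U hU b hb x hx]
          simpa using hx) a haUD
      have hdw : d * w * d⁻¹ = w := by
        have hcw := hcentral U hU d hd w (hW'U hw)
        rw [hcw]
        group
      have he : u * d * w * (u * d)⁻¹ = u * (d * w * d⁻¹) * u⁻¹ := by group
      rw [he, hdw]
      exact hW'conj u hu w hw
    rcases eq_or_ne W' ⊥ with h | h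
    · left
      have h2 : W.map U.subtype = (⊥ : Subgroup ↥U).map U.subtype := by
        rw [← hW'def, h, Subgroup.map_bot]
      exact Subgroup.map_injective U.subtype_injective h2
    · right
      have hWU : W' = U := by
        rw [hgU]
        exact hTcmin g W' (hgU ▸ hW'U) h hW'nb
      have h2 : W.map U.subtype = (⊤ : Subgroup ↥U).map U.subtype := by
        rw [← hW'def, hWU, ← MonoidHom.range_eq_map, Subgroup.range_subtype]
      exact Subgroup.map_injective U.subtype_injective h2
  -- assemble the isomorphism
  let ι := {x : Subgroup Γ // x ∈ F}
  haveI : Fintype ι := FinsetCoe.fintype F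
  let Hfam : ι → Subgroup Γ := fun i => i.1
  have hpair : Pairwise fun i j : ι => ∀ x y : Γ, x ∈ Hfam i → y ∈ Hfam j → Commute x y := by
    intro i j hij x y hx hy
    have hne : i.1 ≠ j.1 := fun h => hij (Subtype.ext h)
    have hinf : Hfam i ⊓ Hfam j = ⊥ := by
      rw [eq_bot_iff, ← hFind i.1 i.2]
      exact inf_le_inf_left _ (le_sSup (by exact_mod_cast Finset.mem_erase.mpr ⟨hne.symm, j.2⟩))
    show x * y = y * x
    exact aux_commute_of_inf_eq_bot hinf
      (fun b hb a ha => hmemnb i.1 i.2 b (hmemN j.1 j.2 hb) a ha)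
      (fun a ha b hb => hmemnb j.1 j.2 a (hmemN i.1 i.2 ha) b hb) x hx y hy
  have hind : iSupIndep Hfam := by
    intro i
    rw [disjoint_iff, eq_bot_iff, ← hFind i.1 i.2]
    refine inf_le_inf_left _ ?_
    refine iSup_le fun j => iSup_le fun hji => le_sSup ?_
    exact_mod_cast Finset.mem_erase.mpr ⟨fun h => hji (Subtype.ext h), j.2⟩
  have hinjf := Subgroup.injective_noncommPiCoprod_of_iSupIndep (hcomm := hpair) hind
  have hrangef : (Subgroup.noncommPiCoprod hpair).range = N := by
    rw [Subgroup.noncommPiCoprod_range, ← hDN', hD]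
    apply le_antisymm
    · exact iSup_le fun i => le_sSup (by exact_mod_cast i.2)
    · exact sSup_le fun U hU => le_iSup Hfam (⟨U, by exact_mod_cast hU⟩ : ι)
  let e1 : (∀ i : ι, ↥(Hfam i)) ≃* ↥N :=
    (MonoidHom.ofInjective hinjf).trans (MulEquiv.subgroupCongr hrangef)
  obtain ⟨U0, hU0⟩ := hFne
  let i0 : ι := ⟨U0, hU0⟩
  have hiso : ∀ i : ι, Nonempty (↥(Hfam i) ≃* ↥(Hfam i0)) := by
    intro i
    obtain ⟨g, hgi⟩ := hF𝒞' i.1 i.2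
    obtain ⟨g0, hg0⟩ := hF𝒞' i0.1 i0.2
    exact ⟨((MulEquiv.subgroupCongr hgi).trans ((cg g).subgroupMap T).symm).trans
      (((cg g0).subgroupMap T).trans (MulEquiv.subgroupCongr hg0.symm))⟩
  refine ⟨Fintype.card ι, ↥(Hfam i0), inferInstance, inferInstance,
    Fintype.card_pos_iff.mpr ⟨i0⟩, hsimp U0 hU0, ?_⟩
  have e2 : (∀ i : ι, ↥(Hfam i)) ≃* (ι → ↥(Hfam i0)) :=
    MulEquiv.piCongrRight (fun i => (hiso i).some)
  have e3 : (ι → ↥(Hfam i0)) ≃* (Fin (Fintype.card ι) → ↥(Hfam i0)) :=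
    MulEquiv.arrowCongr (Fintype.equivFin ι) (MulEquiv.refl _)
  exact ⟨(e1.symm.trans e2).trans e3⟩

end Aux19


section Aux19b

theorem aux_mk_conj_eq {G : Type} [Group G] {K : Subgroup G} [K.Normal] {x a h : G}
    (hcond : (x * h * x⁻¹) * (a * h * a⁻¹)⁻¹ ∈ K) :
    (QuotientGroup.mk' K) (x * h * x⁻¹) = (QuotientGroup.mk' K) (a * h * a⁻¹) := by
  have h1 : (QuotientGroup.mk' K) ((x * h * x⁻¹) * (a * h * a⁻¹)⁻¹) = 1 :=
    (QuotientGroup.eq_one_iff _).mpr hcond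
  rw [map_mul, map_inv] at h1
  exact mul_inv_eq_one.mp h1

theorem aux_chiefHom_eq_conj {G : Type} [Group G] {H K : Subgroup G} [hH : H.Normal]
    [hK : K.Normal] {x : G} (hx : InducesInnerOn x H K) :
    ∃ q : chiefFactorGroup G H K, chiefHom G H K x = MulAut.conj q := by
  obtain ⟨a, haH, hcond⟩ := hx
  refine ⟨⟨QuotientGroup.mk' K a, Subgroup.mem_map_of_mem _ haH⟩, ?_⟩
  apply MulEquiv.ext
  intro q
  apply Subtype.ext
  show ((MulAut.conjNormal (QuotientGroup.mk' K x) q : _) : G ⧸ K) = _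
  rw [MulAut.conjNormal_apply, MulAut.conj_apply]
  obtain ⟨h, hh, hhq⟩ := q.2
  push_cast
  rw [← hhq]
  show QuotientGroup.mk' K x * QuotientGroup.mk' K h * (QuotientGroup.mk' K x)⁻¹
      = QuotientGroup.mk' K a * QuotientGroup.mk' K h * (QuotientGroup.mk' K a)⁻¹
  have h2 := aux_mk_conj_eq (hcond h hh)
  simpa [map_mul, map_inv] using h2

theorem aux_conj_eq_chiefHom {G : Type} [Group G] {H K : Subgroup G} [H.Normal] [K.Normal]
    (q : chiefFactorGroup G H K) :
    ∃ h, h ∈ H ∧ chiefHom G H K h = MulAut.conj q := by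
  obtain ⟨h, hh, hq⟩ := q.2
  refine ⟨h, hh, ?_⟩
  have h1 : chiefHom G H K h = MulAut.conjNormal (QuotientGroup.mk' K h) := rfl
  rw [h1, hq]
  exact MulAut.conjNormal_val

theorem aux_quasi_simple {G : Type} [Group G] [Finite G] {H K : Subgroup G}
    (hc : IsChiefFactor G H K)
    (hinner : ∀ x : G, letI := hc.normalK; InducesInnerOn x H K) :
    letI := hc.normalH; letI := hc.normalK
    IsSimpleGroup (chiefFactorGroup G H K) := by
  letI := hc.normalH; letI := hc.normalK
  haveI : Nontrivial (chiefFactorGroup G H K) :=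
    (Subgroup.nontrivial_iff_ne_bot _).mpr (aux_chief_ne_bot hc.lt)
  constructor
  intro W hW
  set Qb := H.map (QuotientGroup.mk' K) with hQbdef
  set W' := W.map Qb.subtype with hW'def
  have hW'le : W' ≤ Qb := Subgroup.map_subtype_le W
  have hW'n : W'.Normal := by
    constructor
    intro w hw g
    obtain ⟨x, rfl⟩ := QuotientGroup.mk'_surjective K g
    obtain ⟨w0, hw0, rfl⟩ := hw
    obtain ⟨a, haH, hcond⟩ := hinner x
    obtain ⟨h, hhH, hhq⟩ := w0.2
    have haQ : QuotientGroup.mk' K a ∈ Qb := Subgroup.mem_map_of_mem _ haH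
    have key : QuotientGroup.mk' K x * (Qb.subtype w0) * (QuotientGroup.mk' K x)⁻¹
        = Qb.subtype ((⟨QuotientGroup.mk' K a, haQ⟩ : Qb) * w0
            * (⟨QuotientGroup.mk' K a, haQ⟩ : Qb)⁻¹) := by
      show QuotientGroup.mk' K x * (w0 : G ⧸ K) * (QuotientGroup.mk' K x)⁻¹
        = QuotientGroup.mk' K a * (w0 : G ⧸ K) * (QuotientGroup.mk' K a)⁻¹
      rw [← hhq]
      have h2 := aux_mk_conj_eq (hcond h hhH)
      simpa [map_mul, map_inv] using h2
    rw [key]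
    exact Subgroup.mem_map_of_mem _ (hW.conj_mem w0 hw0 _)
  rcases aux_chief_min hc W' hW'n hW'le with h | h
  · left
    have h2 : W.map Qb.subtype = (⊥ : Subgroup ↥Qb).map Qb.subtype := by
      rw [← hW'def, h, Subgroup.map_bot]
    exact Subgroup.map_injective Qb.subtype_injective h2
  · right
    have h2 : W.map Qb.subtype = (⊤ : Subgroup ↥Qb).map Qb.subtype := by
      rw [← hW'def, h, ← MonoidHom.range_eq_map, Subgroup.range_subtype]
    exact Subgroup.map_injective Qb.subtype_injective h2

theorem aux_subnormal_mono {G : Type} [Group G] {n : ℕ} {c : Fin (n + 1) → Subgroup G}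
    (hstep : ∀ i : Fin n, c i.castSucc ≤ c i.succ ∧
      ∀ g ∈ c i.succ, ∀ a ∈ c i.castSucc, g * a * g⁻¹ ∈ c i.castSucc) :
    Monotone c :=
  Fin.monotone_iff_le_succ.mpr (fun i => (hstep i).1)

theorem aux_compfactor_eq {G : Type} [Group G] [Finite G] {H K A B : Subgroup G}
    (hc : IsChiefFactor G H K)
    (hs : letI := hc.normalK; IsSimpleGroup (chiefFactorGroup G H K))
    (hcf : IsCompFactorOf G H K A B) : A = H ∧ B = K := by
  letI := hc.normalH; letI := hc.normalK
  obtain ⟨n, cseq, hc0, hclast, hstep⟩ := hcf.subnormal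
  have hmono : Monotone cseq := aux_subnormal_mono hstep
  have hKA : K ≤ A := hcf.hKB.trans hcf.simple.le
  have hAB : ¬ A ≤ B := hcf.simple.ne
  have hnotAK : ¬ A ≤ K := fun h => hAB (h.trans hcf.hKB)
  have hcseqH : ∀ i, cseq i ≤ H := by
    intro i
    have h1 : cseq i ≤ cseq (Fin.last n) := hmono (Fin.le_last i)
    rwa [hclast] at h1
  have hcseqA : ∀ i, A ≤ cseq i := by
    intro i
    have h1 : cseq 0 ≤ cseq i := hmono (Fin.zero_le i)
    rwa [hc0] at h1
  have key : ∀ m : ℕ, m ≤ n → (cseq ⟨n - m, by omega⟩).map (QuotientGroup.mk' K)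
      = H.map (QuotientGroup.mk' K) := by
    intro m
    induction m with
    | zero =>
      intro _
      have hidx : (⟨n - 0, by omega⟩ : Fin (n + 1)) = Fin.last n := by
        apply Fin.ext; simp
      rw [hidx, hclast]
    | succ m ih =>
      intro hm
      have hm' : m ≤ n := by omega
      have IH := ih hm'
      set i : Fin n := ⟨n - (m + 1), by omega⟩ with hi
      have hcast : (i.castSucc : Fin (n + 1)) = ⟨n - (m + 1), by omega⟩ := rfl
      have hsucc : (i.succ : Fin (n + 1)) = ⟨n - m, by omega⟩ := by
        apply Fin.ext
        show (n - (m + 1)) + 1 = n - m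
        omega
      have hMQ : (cseq i.succ).map (QuotientGroup.mk' K) = H.map (QuotientGroup.mk' K) := by
        rw [hsucc]; exact IH
      have hLM : cseq i.castSucc ≤ cseq i.succ := (hstep i).1
      have hnorm := (hstep i).2
      have hn2 : (((cseq i.castSucc).map (QuotientGroup.mk' K)).subgroupOf
          ((cseq i.succ).map (QuotientGroup.mk' K))).Normal :=
        aux_subgroupOf_normal_of_image (Subgroup.map_mono hLM) hnorm
      rw [hMQ] at hn2
      rcases hs.eq_bot_or_eq_top_of_normal _ hn2 with h | h
      · exfalso
        have hmb : (cseq i.castSucc).map (QuotientGroup.mk' K) = ⊥ :=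
          (Subgroup.subgroupOf_eq_bot.mp h).eq_bot_of_le
            (Subgroup.map_mono (hcseqH i.castSucc))
        apply hnotAK
        intro x hx
        have h1 : QuotientGroup.mk' K x ∈ (cseq i.castSucc).map (QuotientGroup.mk' K) :=
          Subgroup.mem_map_of_mem _ (hcseqA i.castSucc hx)
        rw [hmb] at h1
        exact (QuotientGroup.eq_one_iff x).mp (Subgroup.mem_bot.mp h1)
      · rw [hcast] at *
        exact le_antisymm (Subgroup.map_mono (hcseqH _)) (Subgroup.subgroupOf_eq_top.mp h)
  have hAQ : A.map (QuotientGroup.mk' K) = H.map (QuotientGroup.mk' K) := by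
    have h1 := key n le_rfl
    have hidx : (⟨n - n, by omega⟩ : Fin (n + 1)) = 0 := by
      apply Fin.ext; simp
    rw [hidx, hc0] at h1
    exact h1
  have hAH : A = H := aux_map_eq_inj K A H hKA hc.lt.le hAQ
  have hBH : B ≤ H := hAH ▸ hcf.simple.le
  have hKB : K ≤ B := hcf.hKB
  have hBnorm : ∀ g ∈ H, ∀ b ∈ B, g * b * g⁻¹ ∈ B := by
    intro g hg b hb
    exact hcf.simple.norm g (hAH ▸ hg) b hb
  have hn3 := aux_subgroupOf_normal_of_image (K := K) (H := H) (Subgroup.map_mono hBH) hBnorm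
  rcases hs.eq_bot_or_eq_top_of_normal _ hn3 with h | h
  · have hmb : B.map (QuotientGroup.mk' K) = ⊥ :=
      (Subgroup.subgroupOf_eq_bot.mp h).eq_bot_of_le (Subgroup.map_mono hBH)
    have hBK : B ≤ K := by
      intro x hx
      have h1 : QuotientGroup.mk' K x ∈ B.map (QuotientGroup.mk' K) :=
        Subgroup.mem_map_of_mem _ hx
      rw [hmb] at h1
      exact (QuotientGroup.eq_one_iff x).mp (Subgroup.mem_bot.mp h1)
    exact ⟨hAH, le_antisymm hBK hKB⟩
  · exfalso
    have hBHeq : B = H := aux_map_eq_inj K B H hKB hc.lt.le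
      (le_antisymm (Subgroup.map_mono hBH) (Subgroup.subgroupOf_eq_top.mp h))
    exact hAB (by rw [hAH, ← hBHeq])

theorem aux_simpleSection_of_simple {G : Type} [Group G] {H K : Subgroup G}
    (hc : IsChiefFactor G H K)
    (hs : letI := hc.normalK; IsSimpleGroup (chiefFactorGroup G H K)) :
    SimpleSection G H K := by
  letI := hc.normalH; letI := hc.normalK
  refine ⟨hc.lt.le, fun a _ b hb => hc.normalK.conj_mem b hb a, hc.lt.not_ge, ?_⟩
  intro L hKL hLH hnorm
  have hn := aux_subgroupOf_normal_of_image (K := K) (H := H) (Subgroup.map_mono hLH) hnorm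
  rcases hs.eq_bot_or_eq_top_of_normal _ hn with h | h
  · left
    have hmb : L.map (QuotientGroup.mk' K) = ⊥ :=
      (Subgroup.subgroupOf_eq_bot.mp h).eq_bot_of_le (Subgroup.map_mono hLH)
    have hLK : L ≤ K := by
      intro x hx
      have h1 : QuotientGroup.mk' K x ∈ L.map (QuotientGroup.mk' K) :=
        Subgroup.mem_map_of_mem _ hx
      rw [hmb] at h1
      exact (QuotientGroup.eq_one_iff x).mp (Subgroup.mem_bot.mp h1)
    exact le_antisymm hLK hKL
  · right
    exact aux_map_eq_inj K L H hKL hc.lt.le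
      (le_antisymm (Subgroup.map_mono hLH) (Subgroup.subgroupOf_eq_top.mp h))

theorem aux_central_trivial {G : Type} [Group G] [Finite G] (X : GroupClass)
    (hnil : ContainsNilpotents X) {H K : Subgroup G} [H.Normal] [K.Normal]
    (habel : ∀ a b : chiefFactorGroup G H K, a * b = b * a)
    (hinner : ∀ x : G, InducesInnerOn x H K) :
    IsCentralIn X G H K := by
  have hker : ∀ x : G, chiefHom G H K x = 1 := by
    intro x
    obtain ⟨q, hq⟩ := aux_chiefHom_eq_conj (hinner x)
    rw [hq]
    apply MulEquiv.ext
    intro r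
    show q * r * q⁻¹ = r
    rw [habel q r]
    group
  have hp1 : ∀ p : G ⧸ sectionCentralizer G H K, p = 1 := by
    intro p
    obtain ⟨x, rfl⟩ := QuotientGroup.mk'_surjective (sectionCentralizer G H K) p
    exact (QuotientGroup.eq_one_iff x).mpr (MonoidHom.mem_ker.mpr (hker x))
  have hφ1 : ∀ p : G ⧸ sectionCentralizer G H K,
      QuotientGroup.kerLift (chiefHom G H K) p = 1 := by
    intro p
    rw [hp1 p]; exact map_one _
  have hcomm : ∀ d e : chiefSemidirect G H K, d * e = e * d := by
    intro d e
    have hd : d.right = 1 := hp1 _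
    have he : e.right = 1 := hp1 _
    apply SemidirectProduct.ext
    · show d.left * (QuotientGroup.kerLift (chiefHom G H K)) d.right e.left
          = e.left * (QuotientGroup.kerLift (chiefHom G H K)) e.right d.left
      rw [hφ1 d.right, hφ1 e.right, MulAut.one_apply, MulAut.one_apply]
      exact habel _ _
    · show d.right * e.right = e.right * d.right
      rw [hd, he]
  have hcenter : Subgroup.center (chiefSemidirect G H K) = ⊤ := by
    rw [Subgroup.eq_top_iff']
    intro d
    rw [Subgroup.mem_center_iff]
    intro e
    exact hcomm e d
  haveI : Group.IsNilpotent (chiefSemidirect G H K) :=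
    ⟨⟨1, by rw [upperCentralSeries_one]; exact hcenter⟩⟩
  exact hnil _ ‹_›

theorem aux_central_inner {G : Type} [Group G] [Finite G] (X : GroupClass)
    (hform : IsFormation X) {H K : Subgroup G} [H.Normal] [K.Normal]
    (hinner : ∀ x : G, InducesInnerOn x H K)
    (hcenter : Subgroup.center (chiefFactorGroup G H K) = ⊥)
    (hXQ : X (chiefFactorGroup G H K)) :
    IsCentralIn X G H K := by
  have hconj_inj : Function.Injective (MulAut.conj : (chiefFactorGroup G H K) →* MulAut (chiefFactorGroup G H K)) := by
    intro a b hab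
    have h1 : ∀ g : (chiefFactorGroup G H K), a * g * a⁻¹ = b * g * b⁻¹ := by
      intro g
      have h2 := congrArg (fun φ : MulAut (chiefFactorGroup G H K) => φ g) hab
      simpa [MulAut.conj_apply] using h2
    have h2 : b⁻¹ * a ∈ Subgroup.center (chiefFactorGroup G H K) := by
      rw [Subgroup.mem_center_iff]
      intro g
      have h4 : b⁻¹ * (a * g * a⁻¹) * b = b⁻¹ * (b * g * b⁻¹) * b := by rw [h1 g]
      have h5 : b⁻¹ * (b * g * b⁻¹) * b = g := by group
      rw [h5] at h4
      have h6 : g * (b⁻¹ * a) = (b⁻¹ * (a * g * a⁻¹) * b) * (b⁻¹ * a) := by rw [h4]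
      rw [h6]
      group
    rw [hcenter] at h2
    have h6 : b⁻¹ * a = 1 := Subgroup.mem_bot.mp h2
    have h7 := congrArg (fun z => b * z) h6
    simpa using h7
  have hφinj : Function.Injective (QuotientGroup.kerLift (chiefHom G H K)) :=
    QuotientGroup.kerLift_injective _
  have hrange : (QuotientGroup.kerLift (chiefHom G H K)).range
      = (MulAut.conj : (chiefFactorGroup G H K) →* MulAut (chiefFactorGroup G H K)).range := by
    apply le_antisymm
    · rintro φ ⟨p, rfl⟩
      obtain ⟨x, rfl⟩ := QuotientGroup.mk'_surjective (sectionCentralizer G H K) p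
      obtain ⟨q, hq⟩ := aux_chiefHom_eq_conj (hinner x)
      exact ⟨q, ((QuotientGroup.kerLift_mk (chiefHom G H K) x).trans hq).symm⟩
    · rintro φ ⟨q, rfl⟩
      obtain ⟨h, hh, hq⟩ := aux_conj_eq_chiefHom q
      exact ⟨QuotientGroup.mk h, (QuotientGroup.kerLift_mk (chiefHom G H K) h).trans hq⟩
  let e : (chiefFactorGroup G H K) ≃* (G ⧸ sectionCentralizer G H K) :=
    ((MonoidHom.ofInjective hconj_inj).trans (MulEquiv.subgroupCongr hrange.symm)).trans
      (MonoidHom.ofInjective hφinj).symm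
  have hkey : ∀ b : (chiefFactorGroup G H K), QuotientGroup.kerLift (chiefHom G H K) (e b) = MulAut.conj b := by
    intro b
    show QuotientGroup.kerLift (chiefHom G H K)
        ((MonoidHom.ofInjective hφinj).symm
          (MulEquiv.subgroupCongr hrange.symm (MonoidHom.ofInjective hconj_inj b))) = _
    rw [MonoidHom.apply_ofInjective_symm]
    rw [MulEquiv.subgroupCongr_apply]
    exact MonoidHom.ofInjective_apply hconj_inj
  let Φ : (chiefFactorGroup G H K) × (chiefFactorGroup G H K) →* chiefSemidirect G H K := MonoidHom.mk'
    (fun ab => SemidirectProduct.mk (ab.1 * ab.2⁻¹) (e ab.2))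
    (by
      rintro ⟨a1, b1⟩ ⟨a2, b2⟩
      apply SemidirectProduct.ext
      · show (a1 * a2) * (b1 * b2)⁻¹
            = (a1 * b1⁻¹) * (QuotientGroup.kerLift (chiefHom G H K)) (e b1) (a2 * b2⁻¹)
        rw [hkey, MulAut.conj_apply]
        group
      · show e (b1 * b2) = e b1 * e b2
        rw [map_mul])
  have hΦsurj : Function.Surjective Φ := by
    intro d
    refine ⟨(d.left * e.symm d.right, e.symm d.right), ?_⟩
    apply SemidirectProduct.ext
    · show (d.left * e.symm d.right) * (e.symm d.right)⁻¹ = d.left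
      group
    · show e (e.symm d.right) = d.right
      exact e.apply_symm_apply _
  have hXQQ : X ((chiefFactorGroup G H K) × (chiefFactorGroup G H K)) := by
    have hn1 : (MonoidHom.fst (chiefFactorGroup G H K) (chiefFactorGroup G H K)).ker.Normal := MonoidHom.normal_ker _
    have hn2 : (MonoidHom.snd (chiefFactorGroup G H K) (chiefFactorGroup G H K)).ker.Normal := MonoidHom.normal_ker _
    have h1 : X (((chiefFactorGroup G H K) × (chiefFactorGroup G H K)) ⧸ (MonoidHom.fst (chiefFactorGroup G H K) (chiefFactorGroup G H K)).ker) := by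
      refine hform.image (chiefFactorGroup G H K) _ ((QuotientGroup.mk' _).comp (MonoidHom.inl (chiefFactorGroup G H K) (chiefFactorGroup G H K))) ?_ hXQ
      intro z
      obtain ⟨⟨a, b⟩, rfl⟩ := QuotientGroup.mk'_surjective
        (MonoidHom.fst (chiefFactorGroup G H K) (chiefFactorGroup G H K)).ker z
      refine ⟨a, ?_⟩
      show QuotientGroup.mk' _ ((a, 1) : (chiefFactorGroup G H K) × (chiefFactorGroup G H K)) = QuotientGroup.mk' _ ((a, b) : (chiefFactorGroup G H K) × (chiefFactorGroup G H K))
      apply (QuotientGroup.mk'_eq_mk' _).mpr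
      refine ⟨((1 : (chiefFactorGroup G H K)), b), ?_, ?_⟩
      · show (1 : (chiefFactorGroup G H K)) = 1
        rfl
      · show ((a * 1, 1 * b) : (chiefFactorGroup G H K) × (chiefFactorGroup G H K)) = (a, b)
        simp
    have h2 : X (((chiefFactorGroup G H K) × (chiefFactorGroup G H K)) ⧸ (MonoidHom.snd (chiefFactorGroup G H K) (chiefFactorGroup G H K)).ker) := by
      refine hform.image (chiefFactorGroup G H K) _ ((QuotientGroup.mk' _).comp (MonoidHom.inr (chiefFactorGroup G H K) (chiefFactorGroup G H K))) ?_ hXQ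
      intro z
      obtain ⟨⟨a, b⟩, rfl⟩ := QuotientGroup.mk'_surjective
        (MonoidHom.snd (chiefFactorGroup G H K) (chiefFactorGroup G H K)).ker z
      refine ⟨b, ?_⟩
      show QuotientGroup.mk' _ ((1, b) : (chiefFactorGroup G H K) × (chiefFactorGroup G H K)) = QuotientGroup.mk' _ ((a, b) : (chiefFactorGroup G H K) × (chiefFactorGroup G H K))
      apply (QuotientGroup.mk'_eq_mk' _).mpr
      refine ⟨(a, (1 : (chiefFactorGroup G H K))), ?_, ?_⟩
      · show (1 : (chiefFactorGroup G H K)) = 1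
        rfl
      · show ((1 * a, b * 1) : (chiefFactorGroup G H K) × (chiefFactorGroup G H K)) = (a, b)
        simp
    have hinf : (MonoidHom.fst (chiefFactorGroup G H K) (chiefFactorGroup G H K)).ker ⊓ (MonoidHom.snd (chiefFactorGroup G H K) (chiefFactorGroup G H K)).ker = ⊥ := by
      rw [eq_bot_iff]
      rintro ⟨a, b⟩ hab
      obtain ⟨h1', h2'⟩ := Subgroup.mem_inf.mp hab
      have ha : a = 1 := h1'
      have hb : b = 1 := h2'
      simp [Subgroup.mem_bot, Prod.ext_iff, ha, hb]
    have h3 := hform.inter ((chiefFactorGroup G H K) × (chiefFactorGroup G H K)) _ _ hn1 hn2 h1 h2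
    have h4 := hform.image _ _ (QuotientGroup.quotientMulEquivOfEq hinf).toMonoidHom
      (QuotientGroup.quotientMulEquivOfEq hinf).surjective h3
    exact hform.image _ _ QuotientGroup.quotientBot.toMonoidHom
      QuotientGroup.quotientBot.surjective h4
  exact hform.image ((chiefFactorGroup G H K) × (chiefFactorGroup G H K)) (chiefSemidirect G H K) Φ hΦsurj hXQQ

end Aux19b

/-- Example 1(8): if `X` is a normally hereditary saturated
formation containing all nilpotent groups and `R` is the generalized rank function with
`R(S) = (∅, {1})` for every simple group `S`, then `X(R) = X*`. -/
theorem classR_eq_quasiClass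
    (X : GroupClass) (R : GenRankFun)
    (hform : IsFormation X) (hnh : NormallyHereditary X) (hsat : Saturated X)
    (hnil : ContainsNilpotents X)
    (hA : ∀ (S : Type) [Group S] [Finite S], IsSimpleGroup S → R.A S = ∅)
    (hB : ∀ (S : Type) [Group S] [Finite S], IsSimpleGroup S → R.B S = {1}) :
    ClassR X R = QuasiClass X := by
  funext G gG fG
  apply propext
  constructor
  · intro hG H K hc hecc x
    letI := hc.normalH; letI := hc.normalK
    obtain ⟨hnX, hgr⟩ := hG H K hc hecc
    obtain ⟨n, S, hSg, hSf, hn, hSsimple, ⟨eiso⟩⟩ :=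
      aux_min_normal_decomp (H.map (QuotientGroup.mk' K)) inferInstance
        (aux_chief_ne_bot hc.lt) (aux_chief_min hc)
    letI := hSg; letI := hSf
    have hcongr := R.congr S hSsimple n hn (chiefFactorGroup G H K) ⟨eiso⟩
    rcases hgr with hgA | ⟨hgB, hinner⟩
    · exfalso
      rw [hcongr.1, hA S hSsimple] at hgA
      exact hgA
    · rw [hcongr.2, hB S hSsimple] at hgB
      have hg1 : grank (chiefFactorGroup G H K) = 1 := hgB
      have hprod : IsProdOfSimple (chiefFactorGroup G H K) 1 := by
        rw [← hg1]
        exact Classical.epsilon_spec (p := IsProdOfSimple (chiefFactorGroup G H K))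
          ⟨n, S, hSg, hSsimple, ⟨eiso⟩⟩
      obtain ⟨T, hTg, hTsimple, ⟨eT⟩⟩ := hprod
      letI := hTg
      have hQsimple : IsSimpleGroup (chiefFactorGroup G H K) :=
        aux_simple_of_mulEquiv (eT.trans (MulEquiv.piUnique (fun _ : Fin 1 => T))).symm
          hTsimple
      refine hinner x H K ⟨le_rfl, le_rfl, ⟨0, fun _ => H, rfl, rfl, fun i => i.elim0⟩,
        aux_simpleSection_of_simple hc hQsimple⟩ ⟨?_, ?_⟩
      · intro c
        constructor
        · intro hcH
          exact hc.normalH.conj_mem c hcH x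
        · intro hcH
          have h1 := hc.normalH.conj_mem _ hcH x⁻¹
          have he : x⁻¹ * (x * c * x⁻¹) * x⁻¹⁻¹ = c := by group
          rwa [he] at h1
      · intro c
        constructor
        · intro hcK
          exact hc.normalK.conj_mem c hcK x
        · intro hcK
          have h1 := hc.normalK.conj_mem _ hcK x⁻¹
          have he : x⁻¹ * (x * c * x⁻¹) * x⁻¹⁻¹ = c := by group
          rwa [he] at h1
  · intro hG H K hc hecc
    letI := hc.normalH; letI := hc.normalK
    have hinner : ∀ x : G, InducesInnerOn x H K := hG H K hc hecc
    have hQsimple : IsSimpleGroup (chiefFactorGroup G H K) := aux_quasi_simple hc hinner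
    constructor
    · intro hXQ
      apply hecc
      by_cases habel : ∀ a b : chiefFactorGroup G H K, a * b = b * a
      · exact aux_central_trivial X hnil habel hinner
      · have hcenter : Subgroup.center (chiefFactorGroup G H K) = ⊥ := by
          rcases hQsimple.eq_bot_or_eq_top_of_normal (Subgroup.center _) inferInstance
            with h | h
          · exact h
          · exfalso
            apply habel
            intro a b
            have hm : a ∈ Subgroup.center (chiefFactorGroup G H K) := h ▸ Subgroup.mem_top a
            exact (Subgroup.mem_center_iff.mp hm b).symm
        exact aux_central_inner X hform hinner hcenter hXQ
    · right
      refine ⟨?_, ?_⟩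
      · rw [hB (chiefFactorGroup G H K) hQsimple, aux_grank_simple hQsimple]
        rfl
      · intro x A B hcf hfix
        obtain ⟨hAH, hBK⟩ := aux_compfactor_eq hc hQsimple hcf
        subst hAH
        subst hBK
        exact hinner x
end
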